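/- arXiv:1105.3296 — 7 statements merged into one kernel-verified Lean document; each statement's English description precedes it below -/
import Mathlib

section
/- Let n ≥ 3 be an integer and c₂ > 0. Then there exists a constant c₅ > 0 (depending only on n and c₂) such that for every r > 0, ∫₀^∞ e^{-t} t^{-n/2} e^{-r²/(c₂ t)} dt ≤ c₅ · r^{2-n} · e^{-r/√c₂}. -/
open MeasureTheory Set

lemma lintIoc (q A : ℝ) (hq : 0 ≤ q) (hA : 0 < A) :
    ∫⁻ t in Ioc (0:ℝ) A, ENNReal.ofReal (t ^ q) = ENNReal.ofReal (A ^ (q+1) / (q+1)) := by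
  rw [← ofReal_integral_eq_lintegral_ofReal]
  · congr 1
    rw [← intervalIntegral.integral_of_le hA.le, integral_rpow (Or.inl (by linarith)),
      Real.zero_rpow (by linarith), sub_zero]
  · exact (intervalIntegral.intervalIntegrable_rpow' (by linarith)).1
  · filter_upwards [ae_restrict_mem measurableSet_Ioc] with t ht
    exact Real.rpow_nonneg ht.1.le q

lemma lintIoi (p A : ℝ) (hp : p < -1) (hA : 0 < A) :
    ∫⁻ t in Ioi A, ENNReal.ofReal (t ^ p) = ENNReal.ofReal (-A ^ (p+1) / (p+1)) := by
  rw [← ofReal_integral_eq_lintegral_ofReal (integrableOn_Ioi_rpow_of_lt hp hA)]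
  · congr 1
    exact integral_Ioi_rpow_of_lt hp hA
  · filter_upwards [ae_restrict_mem measurableSet_Ioi] with t ht
    exact Real.rpow_nonneg (hA.trans ht).le p


/-- Key resolvent-kernel estimate for symmetric diffusions (paper, proof of Lemma 5.2(i)):
for `n ≥ 3` and `c₂ > 0` there is `c₅ > 0` such that for all `r > 0`,
`∫₀^∞ e^{-t} t^{-n/2} e^{-r²/(c₂ t)} dt ≤ c₅ r^{2-n} e^{-r/√c₂}`. -/
theorem stmt_0 (n : ℕ) (hn : 3 ≤ n) (c₂ : ℝ) (hc₂ : 0 < c₂) :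
    ∃ c₅ : ℝ, 0 < c₅ ∧ ∀ r : ℝ, 0 < r →
      (∫⁻ t in Ioi (0 : ℝ),
          ENNReal.ofReal (Real.exp (-t) * t ^ (-(n : ℝ) / 2) * Real.exp (-(r ^ 2) / (c₂ * t))))
        ≤ ENNReal.ofReal (c₅ * r ^ (2 - (n : ℝ)) * Real.exp (-(r / Real.sqrt c₂))) := by
  have hN : (3:ℝ) ≤ (n:ℝ) := by exact_mod_cast hn
  set N : ℝ := (n:ℝ) with hNdef
  have h1 : (0:ℝ) < N/2 + 1 := by linarith
  have h2 : (0:ℝ) < N/2 - 1 := by linarith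
  set C : ℝ := (n.factorial : ℝ)/(N/2+1) + 1/(N/2-1) with hCdef
  have hC : 0 < C := by
    have : (0:ℝ) < (n.factorial : ℝ) := by exact_mod_cast n.factorial_pos
    positivity
  refine ⟨C * (2*c₂) ^ (N/2 - 1), by positivity, fun r hr => ?_⟩
  set s : ℝ := Real.sqrt c₂ with hsdef
  have hs : 0 < s := Real.sqrt_pos.mpr hc₂
  have hs2 : s ^ 2 = c₂ := Real.sq_sqrt hc₂.le
  set a : ℝ := r^2/(2*c₂) with hadef
  have ha : 0 < a := by positivity
  set p : ℝ := -(N)/2 with hpdef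
  have hp1 : p < -1 := by rw [hpdef]; linarith
  -- pointwise bound on Ioi 0
  have hpt : ∀ t : ℝ, 0 < t →
      Real.exp (-t) * t ^ p * Real.exp (-(r ^ 2) / (c₂ * t))
        ≤ Real.exp (-(r/s)) * (t ^ p * Real.exp (-(a/t))) := by
    intro t ht
    have hmul : 2*r*s*t ≤ 2*s^2*t^2 + r^2 := by nlinarith [sq_nonneg (s*t - r), sq_nonneg (s*t)]
    have key : r/s ≤ t + r^2/(2*c₂*t) := by
      have e1 : r/s = 2*r*s*t / (2*s^2*t) := by field_simp
      have e2 : t + r^2/(2*c₂*t) = (2*s^2*t^2 + r^2)/(2*s^2*t) := by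
        rw [← hs2]; field_simp
      rw [e1, e2]
      have hden : (0:ℝ) < 2*s^2*t := by positivity
      gcongr
    have e3 : a/t = r^2/(2*c₂*t) := by rw [hadef, div_div]
    have e4 : -(r^2)/(c₂*t) = -(2*(r^2/(2*c₂*t))) := by
      have hct : c₂ * t ≠ 0 := by positivity
      field_simp
    have key2 : -t + -(r^2)/(c₂*t) ≤ -(r/s) + -(a/t) := by
      rw [e3, e4]; linarith
    calc Real.exp (-t) * t ^ p * Real.exp (-(r ^ 2) / (c₂ * t))
        = t ^ p * Real.exp (-t + -(r^2)/(c₂*t)) := by rw [Real.exp_add]; ring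
      _ ≤ t ^ p * Real.exp (-(r/s) + -(a/t)) :=
          mul_le_mul_of_nonneg_left (Real.exp_le_exp.2 key2) (Real.rpow_nonneg ht.le p)
      _ = Real.exp (-(r/s)) * (t ^ p * Real.exp (-(a/t))) := by rw [Real.exp_add]; ring
  -- step 1
  have step1 : (∫⁻ t in Ioi (0 : ℝ),
      ENNReal.ofReal (Real.exp (-t) * t ^ p * Real.exp (-(r ^ 2) / (c₂ * t))))
      ≤ ENNReal.ofReal (Real.exp (-(r/s))) *
        ∫⁻ t in Ioi (0 : ℝ), ENNReal.ofReal (t ^ p * Real.exp (-(a/t))) := by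
    rw [← lintegral_const_mul' _ _ ENNReal.ofReal_ne_top]
    refine lintegral_mono_ae ?_
    filter_upwards [ae_restrict_mem measurableSet_Ioi] with t ht
    rw [← ENNReal.ofReal_mul (Real.exp_pos _).le]
    exact ENNReal.ofReal_le_ofReal (hpt t ht)
  -- inner integral bound
  have hsplit : (∫⁻ t in Ioi (0 : ℝ), ENNReal.ofReal (t ^ p * Real.exp (-(a/t))))
      = (∫⁻ t in Ioc (0:ℝ) a, ENNReal.ofReal (t ^ p * Real.exp (-(a/t))))
        + ∫⁻ t in Ioi a, ENNReal.ofReal (t ^ p * Real.exp (-(a/t))) := by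
    rw [← lintegral_union measurableSet_Ioi Ioc_disjoint_Ioi_same,
      Ioc_union_Ioi_eq_Ioi ha.le]
  -- piece 1
  have piece1 : (∫⁻ t in Ioc (0:ℝ) a, ENNReal.ofReal (t ^ p * Real.exp (-(a/t))))
      ≤ ENNReal.ofReal (((n.factorial : ℝ)/(N/2+1)) * a ^ (1 - N/2)) := by
    have hb : ∀ t ∈ Ioc (0:ℝ) a, t ^ p * Real.exp (-(a/t))
        ≤ ((n.factorial : ℝ)/a^n) * t ^ (N/2) := by
      intro t ht
      have ht0 : 0 < t := ht.1
      have h2' : (a/t)^n / (n.factorial : ℝ) ≤ Real.exp (a/t) :=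
        Real.pow_div_factorial_le_exp (x := a/t) (by positivity) n
      have hx : 0 < (a / t) ^ n / (n.factorial : ℝ) := by positivity
      have h1' : Real.exp (-(a/t)) ≤ (n.factorial : ℝ) * t^n / a^n := by
        rw [Real.exp_neg]
        calc (Real.exp (a/t))⁻¹ ≤ ((a/t)^n / (n.factorial : ℝ))⁻¹ :=
              inv_anti₀ hx h2'
          _ = (n.factorial : ℝ) * t^n / a^n := by
              rw [div_pow]; field_simp
      calc t ^ p * Real.exp (-(a/t)) ≤ t ^ p * ((n.factorial : ℝ) * t^n / a^n) :=
            mul_le_mul_of_nonneg_left h1' (Real.rpow_nonneg ht0.le p)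
        _ = ((n.factorial : ℝ)/a^n) * (t ^ p * t ^ (N:ℝ)) := by
            rw [hNdef, Real.rpow_natCast t n]; ring
        _ = ((n.factorial : ℝ)/a^n) * t ^ (N/2) := by
            rw [← Real.rpow_add ht0]; congr 2; rw [hpdef]; ring
    calc (∫⁻ t in Ioc (0:ℝ) a, ENNReal.ofReal (t ^ p * Real.exp (-(a/t))))
        ≤ ∫⁻ t in Ioc (0:ℝ) a, ENNReal.ofReal (((n.factorial : ℝ)/a^n) * t ^ (N/2)) := by
          refine lintegral_mono_ae ?_
          filter_upwards [ae_restrict_mem measurableSet_Ioc] with t ht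
          exact ENNReal.ofReal_le_ofReal (hb t ht)
      _ = ENNReal.ofReal ((n.factorial : ℝ)/a^n) *
            ∫⁻ t in Ioc (0:ℝ) a, ENNReal.ofReal (t ^ (N/2)) := by
          rw [← lintegral_const_mul' _ _ ENNReal.ofReal_ne_top]
          congr 1; funext t
          rw [← ENNReal.ofReal_mul (by positivity)]
      _ = ENNReal.ofReal ((n.factorial : ℝ)/a^n) * ENNReal.ofReal (a ^ (N/2+1)/(N/2+1)) := by
          rw [lintIoc (N/2) a (by linarith) ha]
      _ = ENNReal.ofReal (((n.factorial : ℝ)/a^n) * (a ^ (N/2+1)/(N/2+1))) := by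
          rw [← ENNReal.ofReal_mul (by positivity)]
      _ = ENNReal.ofReal (((n.factorial : ℝ)/(N/2+1)) * a ^ (1 - N/2)) := by
          congr 1
          rw [← Real.rpow_natCast a n, ← hNdef]
          have e : a ^ (N/2+1) / a ^ N = a ^ (1 - N/2) := by
            rw [← Real.rpow_sub ha]; congr 1; ring
          calc (n.factorial : ℝ)/a^N * (a^(N/2+1)/(N/2+1))
              = ((n.factorial : ℝ)/(N/2+1)) * (a^(N/2+1)/a^N) := by ring
            _ = ((n.factorial : ℝ)/(N/2+1)) * a ^ (1 - N/2) := by rw [e]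
  -- piece 2
  have piece2 : (∫⁻ t in Ioi a, ENNReal.ofReal (t ^ p * Real.exp (-(a/t))))
      ≤ ENNReal.ofReal (a ^ (1 - N/2) / (N/2-1)) := by
    calc (∫⁻ t in Ioi a, ENNReal.ofReal (t ^ p * Real.exp (-(a/t))))
        ≤ ∫⁻ t in Ioi a, ENNReal.ofReal (t ^ p) := by
          refine lintegral_mono_ae ?_
          filter_upwards [ae_restrict_mem measurableSet_Ioi] with t ht
          refine ENNReal.ofReal_le_ofReal ?_
          have := Real.exp_le_one_iff.2 (neg_nonpos.mpr (div_nonneg ha.le (ha.trans ht).le))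
          calc t ^ p * Real.exp (-(a/t)) ≤ t ^ p * 1 :=
                mul_le_mul_of_nonneg_left this (Real.rpow_nonneg (ha.trans ht).le p)
            _ = t ^ p := mul_one _
      _ = ENNReal.ofReal (-a ^ (p+1) / (p+1)) := lintIoi p a hp1 ha
      _ = ENNReal.ofReal (a ^ (1 - N/2) / (N/2-1)) := by
          congr 1
          have hpe : p + 1 = 1 - N/2 := by rw [hpdef]; ring
          rw [hpe, div_eq_div_iff (ne_of_lt (by linarith : 1 - N/2 < 0)) (ne_of_gt h2)]
          ring
  -- combine
  have inner : (∫⁻ t in Ioi (0 : ℝ), ENNReal.ofReal (t ^ p * Real.exp (-(a/t))))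
      ≤ ENNReal.ofReal (C * a ^ (1 - N/2)) := by
    rw [hsplit]
    calc _ ≤ ENNReal.ofReal (((n.factorial : ℝ)/(N/2+1)) * a ^ (1 - N/2))
          + ENNReal.ofReal (a ^ (1 - N/2) / (N/2-1)) := add_le_add piece1 piece2
      _ = ENNReal.ofReal (C * a ^ (1 - N/2)) := by
          rw [← ENNReal.ofReal_add (by positivity) (by positivity)]
          congr 1
          rw [hCdef]; ring
  -- a identity
  have haid : a ^ (1 - N/2) = r ^ (2 - N) * (2*c₂) ^ (N/2 - 1) := by
    rw [hadef, Real.div_rpow (by positivity) (by positivity)]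
    rw [div_eq_mul_inv, ← Real.rpow_neg (by positivity)]
    congr 1
    · rw [← Real.rpow_natCast r 2, ← Real.rpow_mul hr.le]
      norm_num
      congr 1
      ring
    · congr 1; ring
  calc (∫⁻ t in Ioi (0 : ℝ),
      ENNReal.ofReal (Real.exp (-t) * t ^ (-(n : ℝ) / 2) * Real.exp (-(r ^ 2) / (c₂ * t))))
      ≤ ENNReal.ofReal (Real.exp (-(r/s))) *
        ∫⁻ t in Ioi (0 : ℝ), ENNReal.ofReal (t ^ p * Real.exp (-(a/t))) := step1
    _ ≤ ENNReal.ofReal (Real.exp (-(r/s))) * ENNReal.ofReal (C * a ^ (1 - N/2)) := by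
        gcongr
    _ = ENNReal.ofReal (C * (2*c₂) ^ (N/2 - 1) * r ^ (2 - N) * Real.exp (-(r / s))) := by
        rw [← ENNReal.ofReal_mul (Real.exp_pos _).le]
        congr 1
        rw [haid]; ring
end

section
/- Assume the global d-set condition and let 0 < α < d. Define g(r) := min( r^{α−d}, r^{−(d+α)} ) for r > 0. Then for every real q with 1 ≤ q < d/(d−α), sup_{x ∈ E} ∫_E g(|x − y|)^q m(dy) < ∞. -/
open MeasureTheory Set
open scoped ENNReal

private lemma aux_small (n : ℕ) (m : Measure (EuclideanSpace ℝ (Fin n)))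
    (C₂ d β : ℝ) (hC₂ : 0 < C₂) (hβ : 0 < β) (hβd : β < d) :
    ∃ K : ℝ≥0∞, K < ⊤ ∧ ∀ x : EuclideanSpace ℝ (Fin n),
      (∀ r : ℝ, 0 < r → m (Metric.ball x r) ≤ ENNReal.ofReal (C₂ * r ^ d)) →
      ∫⁻ y in Metric.ball x 1, ENNReal.ofReal (dist x y ^ (-β)) ∂m ≤ K := by
  set ρ : ℝ≥0∞ := ENNReal.ofReal ((2:ℝ) ^ (β - d)) with hρ
  have hρ1 : ρ < 1 := by
    rw [hρ, ← ENNReal.ofReal_one]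
    exact (ENNReal.ofReal_lt_ofReal_iff_of_nonneg (by positivity)).2
      (Real.rpow_lt_one_of_one_lt_of_neg one_lt_two (by linarith))
  refine ⟨ENNReal.ofReal ((2:ℝ) ^ β * C₂) * (1 - ρ)⁻¹, ?_, ?_⟩
  · exact ENNReal.mul_lt_top ENNReal.ofReal_lt_top
      (ENNReal.inv_lt_top.2 (tsub_pos_iff_lt.2 hρ1))
  intro x hup
  set r : ℕ → ℝ := fun k => (2:ℝ) ^ (-(k:ℝ)) with hr
  have hrpos : ∀ k, 0 < r k := fun k => Real.rpow_pos_of_pos two_pos _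
  set S : ℕ → Set (EuclideanSpace ℝ (Fin n)) :=
    fun k => Metric.ball x (r k) \ Metric.ball x (r (k+1)) with hSdef
  have hcov : Metric.ball x 1 ⊆ {x} ∪ ⋃ k, S k := by
    intro y hy
    rcases eq_or_ne y x with h | h
    · exact Or.inl (by simp [h])
    have ht : 0 < dist x y := dist_pos.2 h.symm
    have hlt1 : dist x y < 1 := by simpa [Metric.mem_ball, dist_comm] using hy
    have hex : ∃ k : ℕ, r (k+1) ≤ dist x y := by
      obtain ⟨j, hj⟩ := pow_unbounded_of_one_lt (dist x y)⁻¹ (one_lt_two (α := ℝ))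
      refine ⟨j, ?_⟩
      have h2 : ((2:ℝ) ^ j : ℝ) = (2:ℝ) ^ (j:ℝ) := (Real.rpow_natCast 2 j).symm
      have h3 : (2:ℝ) ^ (-(j:ℝ)) ≤ dist x y := by
        rw [Real.rpow_neg (by norm_num), ← h2]
        exact le_of_lt ((inv_lt_comm₀ ht (by positivity)).1 hj)
      refine le_trans ?_ h3
      apply Real.rpow_le_rpow_of_exponent_le one_le_two
      push_cast; linarith
    refine Or.inr (mem_iUnion.2 ⟨Nat.find hex, ?_, ?_⟩)
    · have hk2 : dist x y < r (Nat.find hex) := by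
        rcases Nat.eq_zero_or_pos (Nat.find hex) with h0 | h0
        · rw [h0]; simpa [hr] using hlt1
        · obtain ⟨j, hj⟩ := Nat.exists_eq_succ_of_ne_zero h0.ne'
          have := Nat.find_min hex (m := j) (by omega)
          rw [hj]; exact not_le.1 this
      simpa [Metric.mem_ball, dist_comm] using hk2
    · have := Nat.find_spec hex
      simp only [Metric.mem_ball, dist_comm]
      exact not_lt.2 this
  have hterm : ∀ k : ℕ, ∫⁻ y in S k, ENNReal.ofReal (dist x y ^ (-β)) ∂m
      ≤ ENNReal.ofReal ((2:ℝ) ^ β * C₂) * ρ ^ k := by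
    intro k
    have hb : ∀ y ∈ S k, ENNReal.ofReal (dist x y ^ (-β))
        ≤ ENNReal.ofReal ((r (k+1)) ^ (-β)) := by
      intro y hy
      apply ENNReal.ofReal_le_ofReal
      refine Real.rpow_le_rpow_of_nonpos (hrpos _) ?_ (by linarith)
      have := hy.2
      simp only [Metric.mem_ball, not_lt, dist_comm] at this
      exact this
    calc ∫⁻ y in S k, ENNReal.ofReal (dist x y ^ (-β)) ∂m
        ≤ ∫⁻ _ in S k, ENNReal.ofReal ((r (k+1)) ^ (-β)) ∂m :=
          setLIntegral_mono measurable_const hb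
      _ = ENNReal.ofReal ((r (k+1)) ^ (-β)) * m (S k) := setLIntegral_const _ _
      _ ≤ ENNReal.ofReal ((r (k+1)) ^ (-β)) * ENNReal.ofReal (C₂ * (r k) ^ d) :=
          mul_le_mul_right ((measure_mono diff_subset).trans (hup _ (hrpos k))) _
      _ = ENNReal.ofReal ((r (k+1)) ^ (-β) * (C₂ * (r k) ^ d)) :=
          (ENNReal.ofReal_mul (Real.rpow_nonneg (hrpos _).le _)).symm
      _ = ENNReal.ofReal ((2:ℝ) ^ β * C₂ * ((2:ℝ) ^ (β - d)) ^ k) := by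
          congr 1
          have h1 : (r (k+1)) ^ (-β) = (2:ℝ) ^ (((k:ℝ)+1) * β) := by
            rw [hr]; rw [← Real.rpow_mul (by norm_num)]; push_cast; ring_nf
          have h2 : (r k) ^ d = (2:ℝ) ^ (-(k:ℝ) * d) := by
            rw [hr]; rw [← Real.rpow_mul (by norm_num)]
          have h3 : ((2:ℝ) ^ (β - d)) ^ k = (2:ℝ) ^ ((k:ℝ) * (β - d)) := by
            rw [← Real.rpow_natCast ((2:ℝ) ^ (β - d)) k,
              ← Real.rpow_mul (by norm_num), mul_comm (β - d) (k:ℝ)]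
          have key : (2:ℝ) ^ (((k:ℝ)+1) * β) * (2:ℝ) ^ (-(k:ℝ) * d)
              = (2:ℝ) ^ β * (2:ℝ) ^ ((k:ℝ) * (β - d)) := by
            rw [← Real.rpow_add two_pos, ← Real.rpow_add two_pos]
            congr 1; ring
          rw [h1, h2, h3]
          linear_combination C₂ * key
      _ = ENNReal.ofReal ((2:ℝ) ^ β * C₂) * ρ ^ k := by
          rw [ENNReal.ofReal_mul (by positivity), hρ,
            ENNReal.ofReal_pow (by positivity)]
  have fx0 : ENNReal.ofReal (dist x x ^ (-β)) = 0 := by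
    simp [Real.zero_rpow (by linarith : -β ≠ 0)]
  calc ∫⁻ y in Metric.ball x 1, ENNReal.ofReal (dist x y ^ (-β)) ∂m
      ≤ ∫⁻ y in {x} ∪ ⋃ k, S k, ENNReal.ofReal (dist x y ^ (-β)) ∂m :=
        lintegral_mono_set hcov
    _ ≤ (∫⁻ y in {x}, ENNReal.ofReal (dist x y ^ (-β)) ∂m)
        + ∫⁻ y in ⋃ k, S k, ENNReal.ofReal (dist x y ^ (-β)) ∂m :=
        lintegral_union_le _ _ _
    _ ≤ 0 + ∑' k, ∫⁻ y in S k, ENNReal.ofReal (dist x y ^ (-β)) ∂m := by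
        gcongr
        · rw [lintegral_singleton, fx0, zero_mul]
        · exact lintegral_iUnion_le _ _
    _ ≤ 0 + ∑' k : ℕ, ENNReal.ofReal ((2:ℝ) ^ β * C₂) * ρ ^ k := by
        gcongr with k
        exact hterm k
    _ = ENNReal.ofReal ((2:ℝ) ^ β * C₂) * (1 - ρ)⁻¹ := by
        rw [zero_add, ENNReal.tsum_mul_left, ENNReal.tsum_geometric]

private lemma aux_large (n : ℕ) (m : Measure (EuclideanSpace ℝ (Fin n)))
    (C₂ d β : ℝ) (hC₂ : 0 < C₂) (hd : 0 < d) (hβd : d < β) :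
    ∃ K : ℝ≥0∞, K < ⊤ ∧ ∀ x : EuclideanSpace ℝ (Fin n),
      (∀ r : ℝ, 0 < r → m (Metric.ball x r) ≤ ENNReal.ofReal (C₂ * r ^ d)) →
      ∫⁻ y in (Metric.ball x 1)ᶜ, ENNReal.ofReal (dist x y ^ (-β)) ∂m ≤ K := by
  set ρ : ℝ≥0∞ := ENNReal.ofReal ((2:ℝ) ^ (d - β)) with hρ
  have hρ1 : ρ < 1 := by
    rw [hρ, ← ENNReal.ofReal_one]
    exact (ENNReal.ofReal_lt_ofReal_iff_of_nonneg (by positivity)).2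
      (Real.rpow_lt_one_of_one_lt_of_neg one_lt_two (by linarith))
  refine ⟨ENNReal.ofReal (C₂ * (2:ℝ) ^ d) * (1 - ρ)⁻¹, ?_, ?_⟩
  · exact ENNReal.mul_lt_top ENNReal.ofReal_lt_top
      (ENNReal.inv_lt_top.2 (tsub_pos_iff_lt.2 hρ1))
  intro x hup
  set r : ℕ → ℝ := fun k => (2:ℝ) ^ (k:ℝ) with hr
  have hrpos : ∀ k, 0 < r k := fun k => Real.rpow_pos_of_pos two_pos _
  set S : ℕ → Set (EuclideanSpace ℝ (Fin n)) :=
    fun k => Metric.ball x (r (k+1)) \ Metric.ball x (r k) with hSdef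
  have hcov : (Metric.ball x 1)ᶜ ⊆ ⋃ k, S k := by
    intro y hy
    have h1d : 1 ≤ dist x y := by
      simp only [mem_compl_iff, Metric.mem_ball, not_lt, dist_comm] at hy
      exact hy
    have hex : ∃ k : ℕ, dist x y < r (k+1) := by
      obtain ⟨j, hj⟩ := pow_unbounded_of_one_lt (dist x y) (one_lt_two (α := ℝ))
      refine ⟨j, hj.trans_le ?_⟩
      rw [hr, ← Real.rpow_natCast 2 j]
      apply Real.rpow_le_rpow_of_exponent_le one_le_two
      push_cast; linarith
    refine mem_iUnion.2 ⟨Nat.find hex, ?_, ?_⟩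
    · have := Nat.find_spec hex
      simpa [Metric.mem_ball, dist_comm] using this
    · have hk2 : r (Nat.find hex) ≤ dist x y := by
        rcases Nat.eq_zero_or_pos (Nat.find hex) with h0 | h0
        · rw [h0]; simpa [hr] using h1d
        · obtain ⟨j, hj⟩ := Nat.exists_eq_succ_of_ne_zero h0.ne'
          have := Nat.find_min hex (m := j) (by omega)
          rw [hj]; exact not_lt.1 this
      simp only [Metric.mem_ball, dist_comm, not_lt]
      exact hk2
  have hterm : ∀ k : ℕ, ∫⁻ y in S k, ENNReal.ofReal (dist x y ^ (-β)) ∂m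
      ≤ ENNReal.ofReal (C₂ * (2:ℝ) ^ d) * ρ ^ k := by
    intro k
    have hb : ∀ y ∈ S k, ENNReal.ofReal (dist x y ^ (-β))
        ≤ ENNReal.ofReal ((r k) ^ (-β)) := by
      intro y hy
      apply ENNReal.ofReal_le_ofReal
      refine Real.rpow_le_rpow_of_nonpos (hrpos _) ?_ (by linarith)
      have := hy.2
      simp only [Metric.mem_ball, not_lt, dist_comm] at this
      exact this
    calc ∫⁻ y in S k, ENNReal.ofReal (dist x y ^ (-β)) ∂m
        ≤ ∫⁻ _ in S k, ENNReal.ofReal ((r k) ^ (-β)) ∂m :=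
          setLIntegral_mono measurable_const hb
      _ = ENNReal.ofReal ((r k) ^ (-β)) * m (S k) := setLIntegral_const _ _
      _ ≤ ENNReal.ofReal ((r k) ^ (-β)) * ENNReal.ofReal (C₂ * (r (k+1)) ^ d) :=
          mul_le_mul_right ((measure_mono diff_subset).trans (hup _ (hrpos (k+1)))) _
      _ = ENNReal.ofReal ((r k) ^ (-β) * (C₂ * (r (k+1)) ^ d)) :=
          (ENNReal.ofReal_mul (Real.rpow_nonneg (hrpos _).le _)).symm
      _ = ENNReal.ofReal (C₂ * (2:ℝ) ^ d * ((2:ℝ) ^ (d - β)) ^ k) := by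
          congr 1
          have h1 : (r k) ^ (-β) = (2:ℝ) ^ (-(k:ℝ) * β) := by
            rw [hr]; rw [← Real.rpow_mul (by norm_num)]; ring_nf
          have h2 : (r (k+1)) ^ d = (2:ℝ) ^ (((k:ℝ)+1) * d) := by
            rw [hr]; rw [← Real.rpow_mul (by norm_num)]; push_cast; ring_nf
          have h3 : ((2:ℝ) ^ (d - β)) ^ k = (2:ℝ) ^ ((k:ℝ) * (d - β)) := by
            rw [← Real.rpow_natCast ((2:ℝ) ^ (d - β)) k,
              ← Real.rpow_mul (by norm_num), mul_comm (d - β) (k:ℝ)]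
          have key : (2:ℝ) ^ (-(k:ℝ) * β) * (2:ℝ) ^ (((k:ℝ)+1) * d)
              = (2:ℝ) ^ d * (2:ℝ) ^ ((k:ℝ) * (d - β)) := by
            rw [← Real.rpow_add two_pos, ← Real.rpow_add two_pos]
            congr 1; ring
          rw [h1, h2, h3]
          linear_combination C₂ * key
      _ = ENNReal.ofReal (C₂ * (2:ℝ) ^ d) * ρ ^ k := by
          rw [ENNReal.ofReal_mul (by positivity), hρ,
            ENNReal.ofReal_pow (by positivity)]
  calc ∫⁻ y in (Metric.ball x 1)ᶜ, ENNReal.ofReal (dist x y ^ (-β)) ∂m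
      ≤ ∫⁻ y in ⋃ k, S k, ENNReal.ofReal (dist x y ^ (-β)) ∂m :=
        lintegral_mono_set hcov
    _ ≤ ∑' k, ∫⁻ y in S k, ENNReal.ofReal (dist x y ^ (-β)) ∂m :=
        lintegral_iUnion_le _ _
    _ ≤ ∑' k : ℕ, ENNReal.ofReal (C₂ * (2:ℝ) ^ d) * ρ ^ k := by
        gcongr with k
        exact hterm k
    _ = ENNReal.ofReal (C₂ * (2:ℝ) ^ d) * (1 - ρ)⁻¹ := by
        rw [ENNReal.tsum_mul_left, ENNReal.tsum_geometric]

/-- On a global `d`-set `E ⊆ ℝⁿ`, for `0 < α < d` and `g(r) = min(r^{α-d}, r^{-(d+α)})`: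
for every `1 ≤ q < d/(d-α)`, `sup_{x ∈ E} ∫_E g(|x-y|)^q m(dy) < ∞`. -/
theorem stmt_10 (n : ℕ) (hn : 1 ≤ n) (d : ℝ) (hd0 : 0 < d) (hdn : d ≤ n)
    (E : Set (EuclideanSpace ℝ (Fin n))) (hE : MeasurableSet E) (hEne : E.Nonempty)
    (m : Measure (EuclideanSpace ℝ (Fin n))) (hmE : m Eᶜ = 0)
    (C₁ C₂ : ℝ) (hC₁ : 0 < C₁) (hC₁₂ : C₁ ≤ C₂)
    (hlow : ∀ x ∈ E, ∀ r : ℝ, 0 < r → ENNReal.ofReal (C₁ * r ^ d) ≤ m (Metric.ball x r))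
    (hup : ∀ x ∈ E, ∀ r : ℝ, 0 < r → m (Metric.ball x r) ≤ ENNReal.ofReal (C₂ * r ^ d))
    (α : ℝ) (hα0 : 0 < α) (hαd : α < d) :
    ∀ q : ℝ, 1 ≤ q → q < d / (d - α) →
      (⨆ x ∈ E, ∫⁻ y in E,
          ENNReal.ofReal ((min (dist x y ^ (α - d)) (dist x y ^ (-(d + α)))) ^ q) ∂m) < ⊤ := by
  intro q hq1 hq2
  have hq0 : 0 < q := lt_of_lt_of_le one_pos hq1
  have hda : 0 < d - α := by linarith
  have hC₂ : 0 < C₂ := lt_of_lt_of_le hC₁ hC₁₂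
  set β₁ := (d - α) * q with hβ₁
  set β₂ := (d + α) * q with hβ₂
  have hβ₁0 : 0 < β₁ := mul_pos hda hq0
  have hβ₁d : β₁ < d := by
    have h := (lt_div_iff₀ hda).1 hq2
    nlinarith
  have hβ₂d : d < β₂ := by
    nlinarith [mul_le_mul_of_nonneg_left hq1 (by linarith : (0:ℝ) ≤ d + α)]
  obtain ⟨K₁, hK₁, hB₁⟩ := aux_small n m C₂ d β₁ hC₂ hβ₁0 hβ₁d
  obtain ⟨K₂, hK₂, hB₂⟩ := aux_large n m C₂ d β₂ hC₂ hd0 hβ₂d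
  refine lt_of_le_of_lt (iSup₂_le fun x hx => ?_) (ENNReal.add_lt_top.2 ⟨hK₁, hK₂⟩)
  have hup' : ∀ r : ℝ, 0 < r → m (Metric.ball x r) ≤ ENNReal.ofReal (C₂ * r ^ d) :=
    fun r hr => hup x hx r hr
  have hmin0 : ∀ y : EuclideanSpace ℝ (Fin n),
      (0:ℝ) ≤ min (dist x y ^ (α - d)) (dist x y ^ (-(d + α))) := fun y =>
    le_min (Real.rpow_nonneg dist_nonneg _) (Real.rpow_nonneg dist_nonneg _)
  have hpt1 : ∀ y : EuclideanSpace ℝ (Fin n),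
      ENNReal.ofReal ((min (dist x y ^ (α - d)) (dist x y ^ (-(d + α)))) ^ q)
        ≤ ENNReal.ofReal (dist x y ^ (-β₁)) := by
    intro y
    apply ENNReal.ofReal_le_ofReal
    calc (min (dist x y ^ (α - d)) (dist x y ^ (-(d + α)))) ^ q
        ≤ (dist x y ^ (α - d)) ^ q :=
          Real.rpow_le_rpow (hmin0 y) (min_le_left _ _) hq0.le
      _ = dist x y ^ ((α - d) * q) := (Real.rpow_mul dist_nonneg _ _).symm
      _ = dist x y ^ (-β₁) := by rw [hβ₁]; ring_nf
  have hpt2 : ∀ y : EuclideanSpace ℝ (Fin n),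
      ENNReal.ofReal ((min (dist x y ^ (α - d)) (dist x y ^ (-(d + α)))) ^ q)
        ≤ ENNReal.ofReal (dist x y ^ (-β₂)) := by
    intro y
    apply ENNReal.ofReal_le_ofReal
    calc (min (dist x y ^ (α - d)) (dist x y ^ (-(d + α)))) ^ q
        ≤ (dist x y ^ (-(d + α))) ^ q :=
          Real.rpow_le_rpow (hmin0 y) (min_le_right _ _) hq0.le
      _ = dist x y ^ (-(d + α) * q) := (Real.rpow_mul dist_nonneg _ _).symm
      _ = dist x y ^ (-β₂) := by rw [hβ₂]; ring_nf
  have hmeas : ∀ c : ℝ, Measurable fun y : EuclideanSpace ℝ (Fin n) =>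
      ENNReal.ofReal (dist x y ^ c) := fun c => by fun_prop
  calc ∫⁻ y in E,
        ENNReal.ofReal ((min (dist x y ^ (α - d)) (dist x y ^ (-(d + α)))) ^ q) ∂m
      ≤ ∫⁻ y, ENNReal.ofReal ((min (dist x y ^ (α - d)) (dist x y ^ (-(d + α)))) ^ q) ∂m :=
        setLIntegral_le_lintegral _ _
    _ = (∫⁻ y in Metric.ball x 1,
          ENNReal.ofReal ((min (dist x y ^ (α - d)) (dist x y ^ (-(d + α)))) ^ q) ∂m)
        + ∫⁻ y in (Metric.ball x 1)ᶜ,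
          ENNReal.ofReal ((min (dist x y ^ (α - d)) (dist x y ^ (-(d + α)))) ^ q) ∂m :=
        (lintegral_add_compl _ measurableSet_ball).symm
    _ ≤ K₁ + K₂ := by
        refine add_le_add ?_ ?_
        · exact le_trans (setLIntegral_mono (hmeas (-β₁)) fun y _ => hpt1 y) (hB₁ x hup')
        · exact le_trans (setLIntegral_mono (hmeas (-β₂)) fun y _ => hpt2 y) (hB₂ x hup')
end

section
/- Assume the global d-set condition, let 0 < α < d, let p > d/α, and let f ∈ L^p(E; m). Then lim_{r→0} sup_{x ∈ E} ∫_{B(x,r)} |x − y|^{α−d} |f(y)| m(dy) = 0; that is, for every ε > 0 there is r₀ > 0 such that for all r ∈ (0, r₀) and all x ∈ E, ∫_{B(x,r)} |x − y|^{α−d} |f(y)| m(dy) < ε. -/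
/-!
By Hölder's inequality with the conjugate exponent `q` of `p`, the integral over `B(x, r)` is at
most `‖f‖_p · (∫_{B(x,r)} |x - y|^{-β} dm)^{1/q}` with `β = (d - α) q`, and `p > d/α` is exactly
`β < d`. Cutting `B(x, r)` into the dyadic balls `B(x, r 2^{-j})`, the upper `d`-set bound turns
the kernel integral into a convergent geometric series, `≲ r^{d-β}`. Altogether the integral is
`≲ ‖f‖_p r^{α - d/p}` uniformly in `x ∈ E`, and `α - d/p > 0`.
-/

open MeasureTheory Set Metric Filter Topology
open scoped ENNReal

theorem exists_nat_div_two_pow_le_lt {r s : ℝ} (hs : 0 < s) (hsr : s < r) :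
    ∃ j : ℕ, r / 2 ^ (j + 1) ≤ s ∧ s < r / 2 ^ j := by
  obtain ⟨n, hn_lt, hn_le⟩ := exists_mem_Ioc_zpow (div_pos (hs.trans hsr) hs) one_lt_two
  have hn : 0 ≤ n := by
    by_contra! h
    have : (2 : ℝ) ^ (n + 1) ≤ 1 := zpow_le_one_of_nonpos₀ one_le_two (by omega)
    linarith [(one_lt_div hs).2 hsr]
  lift n to ℕ using hn
  refine ⟨n, ?_, ?_⟩
  · rw [div_le_iff₀ (by positivity), mul_comm, ← div_le_iff₀ hs]
    exact_mod_cast hn_le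
  · rw [lt_div_iff₀ (by positivity), mul_comm, ← lt_div_iff₀ hs]
    exact_mod_cast hn_lt

theorem div_two_pow_rpow_neg_mul_rpow {r : ℝ} (hr : 0 < r) (β d : ℝ) (j : ℕ) :
    (r / 2 ^ (j + 1)) ^ (-β) * (r / 2 ^ j) ^ d
      = 2 ^ β * r ^ (d - β) * ((2 : ℝ) ^ (β - d)) ^ j := by
  have hρ : 0 < r / 2 ^ j := by positivity
  have h2j : ((2 : ℝ) ^ j) ^ (β - d) = ((2 : ℝ) ^ (β - d)) ^ j := by
    rw [← Real.rpow_natCast, ← Real.rpow_mul zero_le_two, mul_comm, Real.rpow_mul zero_le_two,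
      Real.rpow_natCast]
  rw [pow_succ, ← div_div, Real.div_rpow hρ.le zero_le_two, Real.rpow_neg zero_le_two,
    div_inv_eq_mul, mul_right_comm, ← Real.rpow_add hρ, Real.div_rpow hr.le (by positivity),
    ← h2j, div_eq_mul_inv, ← Real.rpow_neg (by positivity), neg_add_eq_sub, neg_sub]
  ring

theorem Real.HolderConjugate.sub_sub_mul_eq {p q : ℝ} (hpq : p.HolderConjugate q) (d α : ℝ) :
    d - (d - α) * q = q * (α - d / p) := by
  have h := hpq.inv_add_inv_eq_one
  have hp := hpq.pos.ne'
  have hq := hpq.symm.pos.ne'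
  field_simp at h ⊢
  linear_combination d * h

theorem setLIntegral_ofReal_mul_abs_le {Y : Type*} [MeasurableSpace Y] {μ : Measure Y}
    {k f : Y → ℝ} (hk : 0 ≤ k) (hkm : AEMeasurable k μ) (hf : AEMeasurable f μ)
    {p q : ℝ} (hpq : p.HolderConjugate q) (s : Set Y) :
    ∫⁻ y in s, ENNReal.ofReal (k y * |f y|) ∂μ
      ≤ (∫⁻ y in s, ENNReal.ofReal (k y ^ q) ∂μ) ^ (1 / q) * eLpNorm f (ENNReal.ofReal p) μ := by
  have hp : ENNReal.ofReal p ≠ 0 := by simpa using hpq.pos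
  calc ∫⁻ y in s, ENNReal.ofReal (k y * |f y|) ∂μ
      = ∫⁻ y in s, ((fun y ↦ ENNReal.ofReal (k y)) * fun y ↦ ‖f y‖ₑ) y ∂μ := by
        refine lintegral_congr fun y ↦ ?_
        rw [Pi.mul_apply, ENNReal.ofReal_mul (hk y), Real.enorm_eq_ofReal_abs]
    _ ≤ (∫⁻ y in s, ENNReal.ofReal (k y) ^ q ∂μ) ^ (1 / q) * (∫⁻ y in s, ‖f y‖ₑ ^ p ∂μ) ^ (1 / p) :=
        ENNReal.lintegral_mul_le_Lp_mul_Lq _ hpq.symm hkm.restrict.ennreal_ofReal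
          hf.restrict.enorm
    _ = (∫⁻ y in s, ENNReal.ofReal (k y ^ q) ∂μ) ^ (1 / q)
          * eLpNorm f (ENNReal.ofReal p) (μ.restrict s) := by
        rw [eLpNorm_eq_lintegral_rpow_enorm_toReal hp ENNReal.ofReal_ne_top,
          ENNReal.toReal_ofReal hpq.nonneg]
        simp_rw [ENNReal.ofReal_rpow_of_nonneg (hk _) hpq.symm.nonneg]
    _ ≤ _ := by gcongr; exact Measure.restrict_le_self

section MetricMeasure

variable {X : Type*} [PseudoMetricSpace X]

theorem ofReal_dist_rpow_neg_le_tsum_indicator {x y : X} {r β : ℝ} (hβ : 0 < β)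
    (hy : y ∈ ball x r) :
    ENNReal.ofReal (dist x y ^ (-β)) ≤ ∑' j : ℕ,
      (ball x (r / 2 ^ j)).indicator (fun _ ↦ ENNReal.ofReal ((r / 2 ^ (j + 1)) ^ (-β))) y := by
  rcases (dist_nonneg (x := x) (y := y)).eq_or_lt with hxy | hxy
  · simp [← hxy, Real.zero_rpow (neg_ne_zero.2 hβ.ne')]
  have hxyr : dist x y < r := by rwa [dist_comm, ← mem_ball]
  have hr : 0 < r := hxy.trans hxyr
  obtain ⟨j, hj_le, hj_lt⟩ := exists_nat_div_two_pow_le_lt hxy hxyr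
  calc ENNReal.ofReal (dist x y ^ (-β))
      ≤ ENNReal.ofReal ((r / 2 ^ (j + 1)) ^ (-β)) :=
        ENNReal.ofReal_le_ofReal <| Real.rpow_le_rpow_of_nonpos
          (by positivity) hj_le (neg_nonpos.2 hβ.le)
    _ = (ball x (r / 2 ^ j)).indicator
          (fun _ ↦ ENNReal.ofReal ((r / 2 ^ (j + 1)) ^ (-β))) y := by
        rw [indicator_of_mem (by rwa [mem_ball, dist_comm])]
    _ ≤ _ := ENNReal.le_tsum j

variable [MeasurableSpace X] [OpensMeasurableSpace X]

theorem setLIntegral_ball_dist_rpow_neg_le {μ : Measure X} {x : X} {C d β r : ℝ} (hβ : 0 < β)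
    (hμ : ∀ ρ : ℝ, 0 < ρ → μ (ball x ρ) ≤ ENNReal.ofReal (C * ρ ^ d)) (hr : 0 < r) :
    ∫⁻ y in ball x r, ENNReal.ofReal (dist x y ^ (-β)) ∂μ
      ≤ ENNReal.ofReal (C * 2 ^ β) * (1 - ENNReal.ofReal (2 ^ (β - d)))⁻¹
        * ENNReal.ofReal (r ^ (d - β)) := by
  set F : ℕ → X → ℝ≥0∞ := fun j ↦
    (ball x (r / 2 ^ j)).indicator (fun _ ↦ ENNReal.ofReal ((r / 2 ^ (j + 1)) ^ (-β)))
  have hF : ∀ j, Measurable (F j) := fun j ↦ measurable_const.indicator measurableSet_ball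
  have hterm : ∀ j, ∫⁻ y, F j y ∂μ
      ≤ ENNReal.ofReal (C * 2 ^ β * r ^ (d - β)) * ENNReal.ofReal (2 ^ (β - d)) ^ j := by
    intro j
    calc ∫⁻ y, F j y ∂μ
        = ENNReal.ofReal ((r / 2 ^ (j + 1)) ^ (-β)) * μ (ball x (r / 2 ^ j)) :=
          lintegral_indicator_const measurableSet_ball _
      _ ≤ ENNReal.ofReal ((r / 2 ^ (j + 1)) ^ (-β)) * ENNReal.ofReal (C * (r / 2 ^ j) ^ d) := by
          gcongr; exact hμ _ (by positivity)
      _ = ENNReal.ofReal (C * 2 ^ β * r ^ (d - β) * (2 ^ (β - d)) ^ j) := by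
          rw [← ENNReal.ofReal_mul (by positivity), mul_left_comm,
            div_two_pow_rpow_neg_mul_rpow hr]
          ring_nf
      _ = _ := by rw [ENNReal.ofReal_mul' (by positivity), ENNReal.ofReal_pow (by positivity)]
  calc ∫⁻ y in ball x r, ENNReal.ofReal (dist x y ^ (-β)) ∂μ
      ≤ ∫⁻ y in ball x r, ∑' j, F j y ∂μ :=
        setLIntegral_mono (Measurable.tsum hF)
          fun y hy ↦ ofReal_dist_rpow_neg_le_tsum_indicator hβ hy
    _ ≤ ∫⁻ y, ∑' j, F j y ∂μ := setLIntegral_le_lintegral _ _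
    _ = ∑' j, ∫⁻ y, F j y ∂μ := lintegral_tsum fun j ↦ (hF j).aemeasurable
    _ ≤ ∑' j : ℕ, ENNReal.ofReal (C * 2 ^ β * r ^ (d - β)) * ENNReal.ofReal (2 ^ (β - d)) ^ j :=
        ENNReal.tsum_le_tsum hterm
    _ = _ := by
        rw [ENNReal.tsum_mul_left, ENNReal.tsum_geometric,
          ENNReal.ofReal_mul' (by positivity : (0 : ℝ) ≤ r ^ (d - β))]
        ring

theorem setLIntegral_ball_dist_rpow_mul_abs_le {μ : Measure X} {x : X} {C d α p q r : ℝ}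
    (hαd : α < d) (hpq : p.HolderConjugate q)
    (hμ : ∀ ρ : ℝ, 0 < ρ → μ (ball x ρ) ≤ ENNReal.ofReal (C * ρ ^ d))
    {f : X → ℝ} (hf : AEMeasurable f μ) (hr : 0 < r) :
    ∫⁻ y in ball x r, ENNReal.ofReal (dist x y ^ (α - d) * |f y|) ∂μ
      ≤ (ENNReal.ofReal (C * 2 ^ ((d - α) * q)) * (1 - ENNReal.ofReal (2 ^ ((d - α) * q - d)))⁻¹)
          ^ (1 / q) * eLpNorm f (ENNReal.ofReal p) μ * ENNReal.ofReal (r ^ (α - d / p)) := by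
  have hq := hpq.symm
  have hexp : (d - (d - α) * q) * (1 / q) = α - d / p := by
    rw [hpq.sub_sub_mul_eq, mul_comm, ← mul_assoc, one_div_mul_cancel hq.pos.ne', one_mul]
  calc ∫⁻ y in ball x r, ENNReal.ofReal (dist x y ^ (α - d) * |f y|) ∂μ
      ≤ (∫⁻ y in ball x r, ENNReal.ofReal (dist x y ^ (-((d - α) * q))) ∂μ) ^ (1 / q)
          * eLpNorm f (ENNReal.ofReal p) μ := by
        have hHolder := setLIntegral_ofReal_mul_abs_le
          (fun y ↦ Real.rpow_nonneg (dist_nonneg (x := x) (y := y)) (α - d))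
          ((continuous_const.dist continuous_id).measurable.pow_const _).aemeasurable hf hpq
          (ball x r)
        simp_rw [← Real.rpow_mul dist_nonneg] at hHolder
        rwa [show -((d - α) * q) = (α - d) * q by ring]
    _ ≤ (ENNReal.ofReal (C * 2 ^ ((d - α) * q)) * (1 - ENNReal.ofReal (2 ^ ((d - α) * q - d)))⁻¹
          * ENNReal.ofReal (r ^ (d - (d - α) * q))) ^ (1 / q) * eLpNorm f (ENNReal.ofReal p) μ := by
        have hK := setLIntegral_ball_dist_rpow_neg_le (mul_pos (sub_pos.2 hαd) hq.pos) hμ hr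
        gcongr
        exact one_div_nonneg.2 hq.nonneg
    _ = _ := by
        rw [ENNReal.mul_rpow_of_nonneg _ _ (one_div_nonneg.2 hq.nonneg),
          ENNReal.ofReal_rpow_of_pos (by positivity), ← Real.rpow_mul hr.le, hexp]
        ring

end MetricMeasure

theorem exists_pos_forall_mul_ofReal_rpow_lt {A : ℝ≥0∞} (hA : A ≠ ⊤) {γ : ℝ} (hγ : 0 < γ)
    {ε : ℝ} (hε : 0 < ε) :
    ∃ r₀ : ℝ, 0 < r₀ ∧ ∀ r : ℝ, 0 < r → r < r₀ →
      A * ENNReal.ofReal (r ^ γ) < ENNReal.ofReal ε := by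
  have hlim : Tendsto (fun r : ℝ ↦ A * ENNReal.ofReal (r ^ γ)) (𝓝 0) (𝓝 0) := by
    have := ENNReal.Tendsto.const_mul (a := A) (ENNReal.tendsto_ofReal
      (Real.continuousAt_rpow_const 0 γ (Or.inr hγ.le)).tendsto) (Or.inr hA)
    simpa [Real.zero_rpow hγ.ne'] using this
  obtain ⟨r₀, hr₀, h⟩ :=
    Metric.eventually_nhds_iff.1 ((tendsto_order.1 hlim).2 _ (ENNReal.ofReal_pos.2 hε))
  exact ⟨r₀, hr₀, fun r hr hrr₀ ↦ h (by rwa [Real.dist_0_eq_abs, abs_of_pos hr])⟩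

theorem stmt_11_general (n : ℕ) (d : ℝ)
    (E : Set (EuclideanSpace ℝ (Fin n)))
    (m : Measure (EuclideanSpace ℝ (Fin n))) (hmE : m Eᶜ = 0)
    (C₂ : ℝ)
    (hup : ∀ x ∈ E, ∀ r : ℝ, 0 < r → m (Metric.ball x r) ≤ ENNReal.ofReal (C₂ * r ^ d))
    (α p : ℝ) (hα0 : 0 < α) (hαd : α < d) (hp : d / α < p)
    (f : EuclideanSpace ℝ (Fin n) → ℝ)
    (hf : MemLp f (ENNReal.ofReal p) (m.restrict E)) :
    ∀ ε : ℝ, 0 < ε → ∃ r₀ : ℝ, 0 < r₀ ∧ ∀ r : ℝ, 0 < r → r < r₀ → ∀ x ∈ E,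
      (∫⁻ y in Metric.ball x r, ENNReal.ofReal (dist x y ^ (α - d) * |f y|) ∂m)
        < ENNReal.ofReal ε := by
  intro ε hε
  have hp1 : 1 < p := ((one_lt_div hα0).2 hαd).trans hp
  have hpq : p.HolderConjugate p.conjExponent := .conjExponent hp1
  set q := p.conjExponent
  have hγ : 0 < α - d / p := by
    rw [sub_pos, div_lt_iff₀ hpq.pos]
    rwa [div_lt_iff₀ hα0, mul_comm] at hp
  have hβd : (d - α) * q - d < 0 := by
    linarith [hpq.sub_sub_mul_eq d α, mul_pos hpq.symm.pos hγ]
  have hK : ENNReal.ofReal (C₂ * 2 ^ ((d - α) * q))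
      * (1 - ENNReal.ofReal (2 ^ ((d - α) * q - d)))⁻¹ ≠ ⊤ := by
    refine ENNReal.mul_ne_top ENNReal.ofReal_ne_top (ENNReal.inv_ne_top.2 ?_)
    exact (tsub_pos_of_lt (ENNReal.ofReal_lt_one.2
      (Real.rpow_lt_one_of_one_lt_of_neg one_lt_two hβd))).ne'
  have hm : m.restrict E = m := Measure.restrict_eq_self_of_ae_mem (by
    rwa [ae_iff, ← compl_def])
  rw [hm] at hf
  obtain ⟨r₀, hr₀, hsmall⟩ := exists_pos_forall_mul_ofReal_rpow_lt
    (ENNReal.mul_ne_top (ENNReal.rpow_ne_top_of_nonneg (one_div_nonneg.2 hpq.symm.nonneg) hK)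
      hf.eLpNorm_ne_top) hγ hε
  exact ⟨r₀, hr₀, fun r hr hrr₀ x hx ↦
    (setLIntegral_ball_dist_rpow_mul_abs_le hαd hpq (hup x hx) hf.aemeasurable hr).trans_lt
      (hsmall r hr hrr₀)⟩

/-- On a global `d`-set `E ⊆ ℝⁿ`, for `0 < α < d`, `p > d/α` and `f ∈ L^p(E;m)`:
`lim_{r→0} sup_{x ∈ E} ∫_{B(x,r)} |x-y|^{α-d} |f(y)| m(dy) = 0`. -/
theorem stmt_11 (n : ℕ) (hn : 1 ≤ n) (d : ℝ) (hd0 : 0 < d) (hdn : d ≤ n)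
    (E : Set (EuclideanSpace ℝ (Fin n))) (hE : MeasurableSet E) (hEne : E.Nonempty)
    (m : Measure (EuclideanSpace ℝ (Fin n))) (hmE : m Eᶜ = 0)
    (C₁ C₂ : ℝ) (hC₁ : 0 < C₁) (hC₁₂ : C₁ ≤ C₂)
    (hlow : ∀ x ∈ E, ∀ r : ℝ, 0 < r → ENNReal.ofReal (C₁ * r ^ d) ≤ m (Metric.ball x r))
    (hup : ∀ x ∈ E, ∀ r : ℝ, 0 < r → m (Metric.ball x r) ≤ ENNReal.ofReal (C₂ * r ^ d))
    (α p : ℝ) (hα0 : 0 < α) (hαd : α < d) (hp : d / α < p)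
    (f : EuclideanSpace ℝ (Fin n) → ℝ)
    (hf : MemLp f (ENNReal.ofReal p) (m.restrict E)) :
    ∀ ε : ℝ, 0 < ε → ∃ r₀ : ℝ, 0 < r₀ ∧ ∀ r : ℝ, 0 < r → r < r₀ → ∀ x ∈ E,
      (∫⁻ y in Metric.ball x r, ENNReal.ofReal (dist x y ^ (α - d) * |f y|) ∂m)
        < ENNReal.ofReal ε :=
  stmt_11_general n d E m hmE C₂ hup α p hα0 hαd hp f hf
end

section
/- Assume the global d-set condition and let 0 < α < 2. Let c(x,y) be a Borel measurable function on ℝⁿ × ℝⁿ with 0 ≤ c(x,y) ≤ C₄ for all x, y, and let u : ℝⁿ → ℝ be continuously differentiable with compact support. Define f_u(x) := ∫_E (u(x) − u(y))² c(x,y) |x − y|^{−(d+α)} m(dy). Then f_u is bounded on E and belongs to L^p(E; m) for every p ∈ [1, ∞). -/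
/-!
Split the integral defining `f_u(x)` at `|x - y| = 1`. Near the diagonal
`(u x - u y)² ≤ L² |x - y|²` since `u` is Lipschitz, far from it `(u x - u y)² ≤ 4 ‖u‖∞²`.
Cutting each region into dyadic annuli, whose mass the upper `d`-set bound controls, both pieces
are dominated by geometric series (ratios `2^(α-2)` and `2^(-α)`), uniformly in `x ∈ E`.

For `L^p`, take `z ∈ E` and `ρ` with `supp u ⊆ B(z, ρ)`. When `|x - z| ≥ 2ρ` only `y ∈ B(z, ρ)`
contribute, so `f_u(x) ≲ |x - z|^(-(d+α))`; the `p`-th power of this decays like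
`|x - z|^(-(d+β))` with `β = p(d+α) - d > 0`, which the same dyadic estimate integrates.
-/

open MeasureTheory Set Metric
open scoped ENNReal

lemma ENNReal.one_sub_ofReal_inv_lt_top {q : ℝ} (hq : q < 1) : (1 - ENNReal.ofReal q)⁻¹ < ∞ :=
  ENNReal.inv_lt_top.2 (tsub_pos_iff_lt.2 (ENNReal.ofReal_lt_one.2 hq))

lemma setLIntegral_le_mul_geometric {X : Type*} [MeasurableSpace X] {m : Measure X} {s : Set X}
    {S : ℕ → Set X} {F : X → ℝ≥0∞} {A q : ℝ≥0∞} (hs : s ⊆ ⋃ k, S k)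
    (hS : ∀ k, ∫⁻ y in S k, F y ∂m ≤ A * q ^ k) :
    ∫⁻ y in s, F y ∂m ≤ A * (1 - q)⁻¹ :=
  calc ∫⁻ y in s, F y ∂m ≤ ∫⁻ y in ⋃ k, S k, F y ∂m := lintegral_mono_set hs
    _ ≤ ∑' k, ∫⁻ y in S k, F y ∂m := lintegral_iUnion_le _ _
    _ ≤ ∑' k, A * q ^ k := ENNReal.tsum_le_tsum hS
    _ = A * (1 - q)⁻¹ := by rw [ENNReal.tsum_mul_left, ENNReal.tsum_geometric]

lemma setLIntegral_le_diff_singleton {X : Type*} [MeasurableSpace X] [MeasurableSingletonClass X]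
    {m : Measure X} {s : Set X} {F : X → ℝ≥0∞} {x : X} (hF : F x = 0) :
    ∫⁻ y in s, F y ∂m ≤ ∫⁻ y in s \ {x}, F y ∂m :=
  calc ∫⁻ y in s, F y ∂m ≤ ∫⁻ y in {x} ∪ s \ {x}, F y ∂m :=
        lintegral_mono_set (by rw [union_sdiff_self]; exact subset_union_right)
    _ ≤ ∫⁻ y in {x}, F y ∂m + ∫⁻ y in s \ {x}, F y ∂m := lintegral_union_le _ _ _
    _ = ∫⁻ y in s \ {x}, F y ∂m := by rw [lintegral_singleton, hF, zero_mul, zero_add]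

lemma Real.rpow_neg_add_mul_rpow {r : ℝ} (hr : 0 < r) (a b : ℝ) :
    r ^ (-(a + b)) * r ^ a = r ^ (-b) := by
  rw [← Real.rpow_add hr]; ring_nf

section UpperRegular

variable {X : Type*} [MetricSpace X] {x : X}

lemma compl_ball_subset_iUnion_annulus {R : ℝ} (hR : 0 < R) :
    (ball x R)ᶜ ⊆ ⋃ k : ℕ, {y | 2 ^ k * R ≤ dist x y} ∩ ball x (2 * (2 ^ k * R)) := by
  intro y hy
  rw [mem_compl_iff, mem_ball', not_lt, ← one_le_div hR] at hy
  obtain ⟨k, hk, hk'⟩ := exists_nat_pow_near hy one_lt_two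
  rw [le_div_iff₀ hR] at hk
  rw [div_lt_iff₀ hR, pow_succ] at hk'
  exact mem_iUnion.2 ⟨k, hk, by rw [mem_ball']; linarith⟩

/-- Consecutive annuli overlap (radius ratio 4) because the upper bound given by
`exists_nat_pow_near_of_lt_one` is not strict. -/
lemma ball_diff_singleton_subset_iUnion_annulus {R : ℝ} (hR : 0 < R) :
    ball x R \ {x} ⊆
      ⋃ k : ℕ, {y | 2⁻¹ * (2⁻¹ ^ k * R) ≤ dist x y} ∩ ball x (2 * (2⁻¹ ^ k * R)) := by
  intro y ⟨hyR, hyx⟩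
  rw [mem_ball'] at hyR
  have hy0 : 0 < dist x y / R := div_pos (dist_pos.2 (Ne.symm hyx)) hR
  obtain ⟨k, hk, hk'⟩ := exists_nat_pow_near_of_lt_one hy0 ((div_le_one hR).2 hyR.le)
    (by norm_num : (0 : ℝ) < 2⁻¹) (by norm_num)
  rw [lt_div_iff₀ hR, pow_succ', mul_assoc] at hk
  rw [div_le_iff₀ hR] at hk'
  have : 0 < 2⁻¹ ^ k * R := by positivity
  exact mem_iUnion.2 ⟨k, hk.le, by rw [mem_ball']; linarith⟩

variable [MeasurableSpace X] {m : Measure X} {C d : ℝ}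

lemma setLIntegral_inter_ball_le (hball : ∀ r, 0 < r → m (ball x r) ≤ ENNReal.ofReal (C * r ^ d))
    {S : Set X} {s B : ℝ} (hs : 0 < s) (hB : 0 ≤ B) {F : X → ℝ≥0∞}
    (hF : ∀ y ∈ S ∩ ball x s, F y ≤ ENNReal.ofReal B) :
    ∫⁻ y in S ∩ ball x s, F y ∂m ≤ ENNReal.ofReal (B * (C * s ^ d)) :=
  calc ∫⁻ y in S ∩ ball x s, F y ∂m ≤ ∫⁻ _ in S ∩ ball x s, ENNReal.ofReal B ∂m :=
        setLIntegral_mono measurable_const hF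
    _ = ENNReal.ofReal B * m (S ∩ ball x s) := setLIntegral_const _ _
    _ ≤ ENNReal.ofReal B * ENNReal.ofReal (C * s ^ d) := by
        gcongr
        exact (measure_mono inter_subset_right).trans (hball s hs)
    _ = ENNReal.ofReal (B * (C * s ^ d)) := (ENNReal.ofReal_mul hB).symm

lemma setLIntegral_compl_ball_dist_rpow_le
    (hball : ∀ r, 0 < r → m (ball x r) ≤ ENNReal.ofReal (C * r ^ d))
    {β R : ℝ} (hdβ : 0 ≤ d + β) (hR : 0 < R) :
    ∫⁻ y in (ball x R)ᶜ, ENNReal.ofReal (dist x y ^ (-(d + β))) ∂m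
      ≤ ENNReal.ofReal (C * 2 ^ d * R ^ (-β)) * (1 - ENNReal.ofReal (2 ^ (-β)))⁻¹ := by
  refine setLIntegral_le_mul_geometric (compl_ball_subset_iUnion_annulus hR) fun k => ?_
  have hr : (0 : ℝ) < 2 ^ k * R := by positivity
  refine (setLIntegral_inter_ball_le hball (by positivity) (Real.rpow_nonneg hr.le _)
    fun y hy => ENNReal.ofReal_le_ofReal
      (Real.rpow_le_rpow_of_nonpos hr hy.1 (by linarith))).trans_eq ?_
  rw [← ENNReal.ofReal_pow (by positivity), ← ENNReal.ofReal_mul' (by positivity)]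
  congr 1
  calc _ = C * 2 ^ d * ((2 ^ k * R) ^ (-(d + β)) * (2 ^ k * R) ^ d) := by
        rw [Real.mul_rpow zero_le_two hr.le]; ring
    _ = _ := by
        rw [Real.rpow_neg_add_mul_rpow hr, Real.mul_rpow (by positivity) hR.le,
          Real.rpow_pow_comm zero_le_two]
        ring

lemma setLIntegral_ball_dist_sq_mul_rpow_le [OpensMeasurableSpace X]
    (hball : ∀ r, 0 < r → m (ball x r) ≤ ENNReal.ofReal (C * r ^ d))
    {α R : ℝ} (hdα : 0 ≤ d + α) (hR : 0 < R) :
    ∫⁻ y in ball x R, ENNReal.ofReal (dist x y ^ 2 * dist x y ^ (-(d + α))) ∂m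
      ≤ ENNReal.ofReal (C * 2 ^ (2 * d + α + 2) * R ^ (2 - α))
          * (1 - ENNReal.ofReal (2⁻¹ ^ (2 - α)))⁻¹ := by
  refine (setLIntegral_le_diff_singleton (by simp)).trans
    (setLIntegral_le_mul_geometric (ball_diff_singleton_subset_iUnion_annulus hR) fun k => ?_)
  have hr : (0 : ℝ) < 2⁻¹ ^ k * R := by positivity
  refine (setLIntegral_inter_ball_le hball (by positivity)
    (B := (2 * (2⁻¹ ^ k * R)) ^ 2 * (2⁻¹ * (2⁻¹ ^ k * R)) ^ (-(d + α))) (by positivity)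
    fun y hy => ENNReal.ofReal_le_ofReal ?_).trans_eq ?_
  · obtain ⟨hy₁, hy₂⟩ := hy
    rw [mem_ball'] at hy₂
    exact mul_le_mul (pow_le_pow_left₀ dist_nonneg hy₂.le 2)
      (Real.rpow_le_rpow_of_nonpos (by positivity) hy₁ (by linarith)) (by positivity)
      (by positivity)
  · rw [← ENNReal.ofReal_pow (by positivity), ← ENNReal.ofReal_mul' (by positivity)]
    congr 1
    calc _ = C * (4 * 2 ^ d * 2⁻¹ ^ (-(d + α))) * ((2⁻¹ ^ k * R) ^ (2 : ℝ)
            * (2⁻¹ ^ k * R) ^ (-(d + α)) * (2⁻¹ ^ k * R) ^ d) := by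
          rw [Real.mul_rpow zero_le_two hr.le, Real.mul_rpow (by norm_num) hr.le,
            Real.rpow_two]
          ring
      _ = _ := by
          rw [← Real.rpow_add hr, ← Real.rpow_add hr, Real.mul_rpow (by positivity) hR.le,
            Real.rpow_pow_comm (by norm_num), Real.inv_rpow zero_le_two,
            Real.rpow_neg zero_le_two, inv_inv]
          have : (4 : ℝ) * 2 ^ d * 2 ^ (d + α) = 2 ^ (2 * d + α + 2) := by
            rw [show (4 : ℝ) = 2 ^ (2 : ℝ) by norm_num, ← Real.rpow_add two_pos,
              ← Real.rpow_add two_pos]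
            ring_nf
          rw [← this]
          ring_nf

lemma setLIntegral_compl_ball_ofReal_dist_rpow_rpow_lt_top {z : X}
    (hball : ∀ r, 0 < r → m (ball z r) ≤ ENNReal.ofReal (C * r ^ d)) (hd : 0 ≤ d)
    {R γ p : ℝ} (hR : 0 < R) (hp : 0 ≤ p) (hpγ : d < p * γ) :
    ∫⁻ x in (ball z R)ᶜ, ENNReal.ofReal (dist z x ^ (-γ)) ^ p ∂m < ∞ := by
  have hq := (ENNReal.one_sub_ofReal_inv_lt_top
    (Real.rpow_lt_one_of_one_lt_of_neg one_lt_two (by linarith : -(p * γ - d) < 0))).ne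
  have hexp : ∀ x, ENNReal.ofReal (dist z x ^ (-γ)) ^ p
      = ENNReal.ofReal (dist z x ^ (-(d + (p * γ - d)))) := fun x => by
    rw [ENNReal.ofReal_rpow_of_nonneg (by positivity) hp, ← Real.rpow_mul dist_nonneg]
    ring_nf
  simp_rw [hexp]
  exact (setLIntegral_compl_ball_dist_rpow_le hball (by linarith) hR).trans_lt (by finiteness)

lemma setLIntegral_rpow_lt_top_of_le_of_decay [OpensMeasurableSpace X] {z : X}
    (hball : ∀ r, 0 < r → m (ball z r) ≤ ENNReal.ofReal (C * r ^ d)) (hd : 0 ≤ d)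
    {s : Set X} {g : X → ℝ≥0∞} {K A : ℝ≥0∞} {R γ p : ℝ} (hK : K ≠ ∞) (hA : A ≠ ∞) (hR : 0 < R)
    (hgK : ∀ x ∈ s, g x ≤ K) (hgA : ∀ x, R ≤ dist z x → g x ≤ A * ENNReal.ofReal (dist z x ^ (-γ)))
    (hp : 0 ≤ p) (hpγ : d < p * γ) :
    ∫⁻ x in s, g x ^ p ∂m < ∞ := by
  have hKp := ENNReal.rpow_ne_top_of_nonneg hp hK
  have hAp := ENNReal.rpow_ne_top_of_nonneg hp hA
  have hnear : ∫⁻ x in s ∩ ball z R, g x ^ p ∂m ≤ K ^ p * ENNReal.ofReal (C * R ^ d) :=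
    calc ∫⁻ x in s ∩ ball z R, g x ^ p ∂m ≤ ∫⁻ _ in s ∩ ball z R, K ^ p ∂m :=
          setLIntegral_mono measurable_const fun x hx => ENNReal.rpow_le_rpow (hgK x hx.1) hp
      _ = K ^ p * m (s ∩ ball z R) := setLIntegral_const _ _
      _ ≤ K ^ p * ENNReal.ofReal (C * R ^ d) := by
          gcongr
          exact (measure_mono inter_subset_right).trans (hball R hR)
  have hfar : ∫⁻ x in (ball z R)ᶜ, g x ^ p ∂m
      ≤ A ^ p * ∫⁻ x in (ball z R)ᶜ, ENNReal.ofReal (dist z x ^ (-γ)) ^ p ∂m :=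
    calc ∫⁻ x in (ball z R)ᶜ, g x ^ p ∂m
        ≤ ∫⁻ x in (ball z R)ᶜ, A ^ p * ENNReal.ofReal (dist z x ^ (-γ)) ^ p ∂m := by
          refine setLIntegral_mono' measurableSet_ball.compl fun x hx => ?_
          rw [mem_compl_iff, mem_ball', not_lt] at hx
          rw [← ENNReal.mul_rpow_of_nonneg _ _ hp]
          exact ENNReal.rpow_le_rpow (hgA x hx) hp
      _ = _ := lintegral_const_mul' _ _ hAp
  have hdecay := setLIntegral_compl_ball_ofReal_dist_rpow_rpow_lt_top hball hd hR hp hpγ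
  calc ∫⁻ x in s, g x ^ p ∂m
      ≤ ∫⁻ x in s ∩ ball z R, g x ^ p ∂m + ∫⁻ x in (ball z R)ᶜ, g x ^ p ∂m :=
        (lintegral_mono_set fun x hx => by
          by_cases h : x ∈ ball z R
          exacts [Or.inl ⟨hx, h⟩, Or.inr h]).trans (lintegral_union_le _ _ _)
    _ < ∞ := ENNReal.add_lt_top.2 ⟨hnear.trans_lt (by finiteness),
        hfar.trans_lt (ENNReal.mul_lt_top hAp.lt_top hdecay)⟩

end UpperRegular

section EnergyDensity

variable {X : Type*} [MetricSpace X] [MeasurableSpace X]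

/-- The paper's `f_u`; for `μ = m.restrict E` it is the density of the energy measure `μ_⟨u⟩`
with respect to `m`. -/
noncomputable def energyDensity (μ : Measure X) (c : X → X → ℝ) (d α : ℝ) (u : X → ℝ) (x : X) :
    ℝ≥0∞ :=
  ∫⁻ y, ENNReal.ofReal ((u x - u y) ^ 2 * c x y * dist x y ^ (-(d + α))) ∂μ

variable {μ : Measure X} {c : X → X → ℝ} {u : X → ℝ} {C C₄ d α M : ℝ}

lemma setLIntegral_ball_energy_le [OpensMeasurableSpace X] {x : X}
    (hball : ∀ r, 0 < r → μ (ball x r) ≤ ENNReal.ofReal (C * r ^ d)) {L : NNReal}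
    (hu : LipschitzWith L u) (hc0 : ∀ x y, 0 ≤ c x y) (hcC₄ : ∀ x y, c x y ≤ C₄)
    (hdα : 0 ≤ d + α) :
    ∫⁻ y in ball x 1, ENNReal.ofReal ((u x - u y) ^ 2 * c x y * dist x y ^ (-(d + α))) ∂μ
      ≤ ENNReal.ofReal (L ^ 2 * C₄) * (ENNReal.ofReal (C * 2 ^ (2 * d + α + 2))
          * (1 - ENNReal.ofReal (2⁻¹ ^ (2 - α)))⁻¹) := by
  have hC₄ : 0 ≤ C₄ := (hc0 x x).trans (hcC₄ x x)
  calc _ ≤ ∫⁻ y in ball x 1, ENNReal.ofReal (L ^ 2 * C₄)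
          * ENNReal.ofReal (dist x y ^ 2 * dist x y ^ (-(d + α))) ∂μ := by
        refine lintegral_mono fun y => ?_
        rw [← ENNReal.ofReal_mul (by positivity)]
        have hsq : (u x - u y) ^ 2 ≤ L ^ 2 * dist x y ^ 2 := by
          rw [← mul_pow, ← sq_abs, ← Real.dist_eq]
          exact pow_le_pow_left₀ dist_nonneg (hu.dist_le_mul x y) 2
        refine ENNReal.ofReal_le_ofReal ?_
        calc _ ≤ L ^ 2 * dist x y ^ 2 * C₄ * dist x y ^ (-(d + α)) :=
              mul_le_mul_of_nonneg_right (mul_le_mul hsq (hcC₄ x y) (hc0 x y) (by positivity))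
                (by positivity)
          _ = _ := by ring
    _ = _ := lintegral_const_mul' _ _ ENNReal.ofReal_ne_top
    _ ≤ _ := by
        gcongr
        simpa only [Real.one_rpow, mul_one] using
          setLIntegral_ball_dist_sq_mul_rpow_le hball hdα one_pos

lemma setLIntegral_compl_ball_energy_le [OpensMeasurableSpace X] {x : X}
    (hball : ∀ r, 0 < r → μ (ball x r) ≤ ENNReal.ofReal (C * r ^ d))
    (hM : ∀ y, |u y| ≤ M) (hc0 : ∀ x y, 0 ≤ c x y) (hcC₄ : ∀ x y, c x y ≤ C₄)
    (hdα : 0 ≤ d + α) :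
    ∫⁻ y in (ball x 1)ᶜ, ENNReal.ofReal ((u x - u y) ^ 2 * c x y * dist x y ^ (-(d + α))) ∂μ
      ≤ ENNReal.ofReal ((2 * M) ^ 2 * C₄) * (ENNReal.ofReal (C * 2 ^ d)
          * (1 - ENNReal.ofReal (2 ^ (-α)))⁻¹) := by
  have hC₄ : 0 ≤ C₄ := (hc0 x x).trans (hcC₄ x x)
  calc _ ≤ ∫⁻ y in (ball x 1)ᶜ, ENNReal.ofReal ((2 * M) ^ 2 * C₄)
          * ENNReal.ofReal (dist x y ^ (-(d + α))) ∂μ := by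
        refine lintegral_mono fun y => ?_
        rw [← ENNReal.ofReal_mul (by positivity)]
        have hsq : (u x - u y) ^ 2 ≤ (2 * M) ^ 2 := by
          rw [← sq_abs]
          exact pow_le_pow_left₀ (abs_nonneg _)
            ((abs_sub _ _).trans (by linarith [hM x, hM y])) 2
        exact ENNReal.ofReal_le_ofReal (mul_le_mul_of_nonneg_right
          (mul_le_mul hsq (hcC₄ x y) (hc0 x y) (by positivity)) (by positivity))
    _ = _ := lintegral_const_mul' _ _ ENNReal.ofReal_ne_top
    _ ≤ _ := by
        gcongr
        simpa only [Real.one_rpow, mul_one] using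
          setLIntegral_compl_ball_dist_rpow_le hball hdα one_pos

lemma exists_energyDensity_le [OpensMeasurableSpace X] {L : NNReal} (hu : LipschitzWith L u)
    (hM : ∀ y, |u y| ≤ M) (hc0 : ∀ x y, 0 ≤ c x y) (hcC₄ : ∀ x y, c x y ≤ C₄)
    (hd : 0 ≤ d) (hα0 : 0 < α) (hα2 : α < 2) :
    ∃ K < ∞, ∀ x, (∀ r, 0 < r → μ (ball x r) ≤ ENNReal.ofReal (C * r ^ d)) →
      energyDensity μ c d α u x ≤ K := by
  have hnear := (ENNReal.one_sub_ofReal_inv_lt_top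
    (Real.rpow_lt_one (by norm_num) (by norm_num : (2 : ℝ)⁻¹ < 1) (by linarith : 0 < 2 - α))).ne
  have htail := (ENNReal.one_sub_ofReal_inv_lt_top
    (Real.rpow_lt_one_of_one_lt_of_neg one_lt_two (neg_neg_of_pos hα0))).ne
  refine ⟨ENNReal.ofReal (L ^ 2 * C₄) * (ENNReal.ofReal (C * 2 ^ (2 * d + α + 2))
      * (1 - ENNReal.ofReal (2⁻¹ ^ (2 - α)))⁻¹)
    + ENNReal.ofReal ((2 * M) ^ 2 * C₄) * (ENNReal.ofReal (C * 2 ^ d)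
      * (1 - ENNReal.ofReal (2 ^ (-α)))⁻¹), by finiteness, fun x hball => ?_⟩
  rw [energyDensity, ← lintegral_add_compl _ (measurableSet_ball (x := x) (ε := 1))]
  exact add_le_add (setLIntegral_ball_energy_le hball hu hc0 hcC₄ (by linarith))
    (setLIntegral_compl_ball_energy_le hball hM hc0 hcC₄ (by linarith))

lemma energyDensity_le_of_tsupport_subset_ball [OpensMeasurableSpace X] {z x : X} {ρ : ℝ}
    (hsupp : tsupport u ⊆ ball z ρ) (hM : ∀ y, |u y| ≤ M) (hc0 : ∀ x y, 0 ≤ c x y)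
    (hcC₄ : ∀ x y, c x y ≤ C₄) (hdα : 0 ≤ d + α) (hx : 2 * ρ ≤ dist z x) :
    energyDensity μ c d α u x
      ≤ ENNReal.ofReal (M ^ 2 * C₄ * 2 ^ (d + α)) * μ (ball z ρ)
          * ENNReal.ofReal (dist z x ^ (-(d + α))) := by
  have hux : u x = 0 := image_eq_zero_of_notMem_tsupport fun h => by
    have := hsupp h
    rw [mem_ball'] at this
    linarith [dist_nonneg (x := z) (y := x)]
  have hpt : ∀ y, ENNReal.ofReal ((u x - u y) ^ 2 * c x y * dist x y ^ (-(d + α)))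
      ≤ (ball z ρ).indicator
          (fun _ => ENNReal.ofReal (M ^ 2 * C₄ * 2 ^ (d + α) * dist z x ^ (-(d + α)))) y := by
    intro y
    by_cases hy : y ∈ ball z ρ
    · rw [indicator_of_mem hy]
      refine ENNReal.ofReal_le_ofReal ?_
      rw [mem_ball'] at hy
      have hzx : 0 < dist z x / 2 := by linarith [dist_nonneg (x := z) (y := y)]
      have hxy : dist z x / 2 ≤ dist x y := by
        linarith [dist_triangle z y x, dist_comm x y]
      have hsq : (u x - u y) ^ 2 ≤ M ^ 2 := by
        rw [hux, zero_sub, neg_sq, ← sq_abs]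
        exact pow_le_pow_left₀ (abs_nonneg _) (hM y) 2
      calc (u x - u y) ^ 2 * c x y * dist x y ^ (-(d + α))
          ≤ M ^ 2 * C₄ * (dist z x / 2) ^ (-(d + α)) :=
            mul_le_mul (mul_le_mul hsq (hcC₄ x y) (hc0 x y) (sq_nonneg _))
              (Real.rpow_le_rpow_of_nonpos hzx hxy (by linarith)) (by positivity)
              (mul_nonneg (sq_nonneg M) ((hc0 x y).trans (hcC₄ x y)))
        _ = M ^ 2 * C₄ * 2 ^ (d + α) * dist z x ^ (-(d + α)) := by
            rw [Real.div_rpow dist_nonneg zero_le_two, Real.rpow_neg zero_le_two, div_inv_eq_mul]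
            ring
    · rw [indicator_of_notMem hy, hux,
        image_eq_zero_of_notMem_tsupport fun h => hy (hsupp h)]
      simp
  calc energyDensity μ c d α u x ≤ _ := lintegral_mono hpt
    _ = _ := lintegral_indicator_const measurableSet_ball _
    _ = _ := by rw [ENNReal.ofReal_mul' (by positivity)]; ring

end EnergyDensity

theorem stmt_12_general (n : ℕ) (d : ℝ) (hd0 : 0 < d)
    (E : Set (EuclideanSpace ℝ (Fin n))) (hEne : E.Nonempty)
    (m : Measure (EuclideanSpace ℝ (Fin n)))
    (C₂ : ℝ)
    (hup : ∀ x ∈ E, ∀ r : ℝ, 0 < r → m (Metric.ball x r) ≤ ENNReal.ofReal (C₂ * r ^ d))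
    (α : ℝ) (hα0 : 0 < α) (hα2 : α < 2)
    (c : EuclideanSpace ℝ (Fin n) → EuclideanSpace ℝ (Fin n) → ℝ) (C₄ : ℝ)
    (hc0 : ∀ x y, 0 ≤ c x y) (hcC₄ : ∀ x y, c x y ≤ C₄)
    (u : EuclideanSpace ℝ (Fin n) → ℝ) (hu : ContDiff ℝ 1 u) (hu_supp : HasCompactSupport u) :
    (∃ M : ℝ, ∀ x ∈ E,
        (∫⁻ y in E, ENNReal.ofReal ((u x - u y) ^ 2 * c x y * dist x y ^ (-(d + α))) ∂m)
          ≤ ENNReal.ofReal M) ∧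
    (∀ p : ℝ, 1 ≤ p →
        (∫⁻ x in E,
            (∫⁻ y in E, ENNReal.ofReal ((u x - u y) ^ 2 * c x y * dist x y ^ (-(d + α))) ∂m) ^ p
          ∂m) < ⊤) := by
  obtain ⟨z, hz⟩ := hEne
  have hupE : ∀ x ∈ E, ∀ r : ℝ, 0 < r →
      m.restrict E (ball x r) ≤ ENNReal.ofReal (C₂ * r ^ d) :=
    fun x hx r hr => (Measure.restrict_apply_le _ _).trans (hup x hx r hr)
  obtain ⟨L, hL⟩ := hu.lipschitzWith_of_hasCompactSupport hu_supp one_ne_zero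
  obtain ⟨M, hM⟩ := hu.continuous.bounded_above_of_compact_support hu_supp
  replace hM : ∀ y, |u y| ≤ M := fun y => by simpa only [Real.norm_eq_abs] using hM y
  obtain ⟨K, hK, hfK⟩ := exists_energyDensity_le (μ := m.restrict E) hL hM hc0 hcC₄ hd0.le hα0 hα2
  refine ⟨⟨K.toReal, fun x hx => (ENNReal.ofReal_toReal hK.ne).symm ▸ hfK x (hupE x hx)⟩,
    fun p hp => ?_⟩
  obtain ⟨ρ, hρ, hsupp⟩ := hu_supp.isBounded.subset_ball_lt 0 z
  exact setLIntegral_rpow_lt_top_of_le_of_decay (hup z hz) hd0.le hK.ne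
    (ENNReal.mul_ne_top ENNReal.ofReal_ne_top ((hupE z hz ρ hρ).trans_lt ENNReal.ofReal_lt_top).ne)
    (by linarith) (fun x hx => hfK x (hupE x hx))
    (fun x hx => energyDensity_le_of_tsupport_subset_ball hsupp hM hc0 hcC₄ (by linarith) hx)
    (by linarith) (by nlinarith)

/-- On a global `d`-set `E ⊆ ℝⁿ` with `0 < α < 2`, for `u ∈ C¹_c(ℝⁿ)` the function
`f_u(x) = ∫_E (u(x)-u(y))² c(x,y) |x-y|^{-(d+α)} m(dy)` is bounded on `E`
and lies in `L^p(E;m)` for every `p ∈ [1,∞)`. -/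
theorem stmt_12 (n : ℕ) (hn : 1 ≤ n) (d : ℝ) (hd0 : 0 < d) (hdn : d ≤ n)
    (E : Set (EuclideanSpace ℝ (Fin n))) (hE : MeasurableSet E) (hEne : E.Nonempty)
    (m : Measure (EuclideanSpace ℝ (Fin n))) (hmE : m Eᶜ = 0)
    (C₁ C₂ : ℝ) (hC₁ : 0 < C₁) (hC₁₂ : C₁ ≤ C₂)
    (hlow : ∀ x ∈ E, ∀ r : ℝ, 0 < r → ENNReal.ofReal (C₁ * r ^ d) ≤ m (Metric.ball x r))
    (hup : ∀ x ∈ E, ∀ r : ℝ, 0 < r → m (Metric.ball x r) ≤ ENNReal.ofReal (C₂ * r ^ d))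
    (α : ℝ) (hα0 : 0 < α) (hα2 : α < 2)
    (c : EuclideanSpace ℝ (Fin n) → EuclideanSpace ℝ (Fin n) → ℝ) (C₄ : ℝ)
    (hc_meas : Measurable (fun q : EuclideanSpace ℝ (Fin n) × EuclideanSpace ℝ (Fin n) => c q.1 q.2))
    (hc0 : ∀ x y, 0 ≤ c x y) (hcC₄ : ∀ x y, c x y ≤ C₄)
    (u : EuclideanSpace ℝ (Fin n) → ℝ) (hu : ContDiff ℝ 1 u) (hu_supp : HasCompactSupport u) :
    (∃ M : ℝ, ∀ x ∈ E,
        (∫⁻ y in E, ENNReal.ofReal ((u x - u y) ^ 2 * c x y * dist x y ^ (-(d + α))) ∂m)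
          ≤ ENNReal.ofReal M) ∧
    (∀ p : ℝ, 1 ≤ p →
        (∫⁻ x in E,
            (∫⁻ y in E, ENNReal.ofReal ((u x - u y) ^ 2 * c x y * dist x y ^ (-(d + α))) ∂m) ^ p
          ∂m) < ⊤) :=
  stmt_12_general n d hd0 E hEne m C₂ hup α hα0 hα2 c C₄ hc0 hcC₄ u hu hu_supp
end

section
/- Assume the global d-set condition and let 0 < α < 2. Let c(x,y) be a Borel measurable function on ℝⁿ × ℝⁿ with 0 ≤ c(x,y) ≤ C₄ for all x, y. Let K ⊆ ℝⁿ be compact, let γ > α and c₀ > 0, and let F : ℝⁿ × ℝⁿ → ℝ be a bounded Borel function such that |F(x,y)| ≤ c₀ |x − y|^γ for all x, y and F(x,y) = 0 whenever y ∉ K. Then the function f(x) := ∫_E |F(x,y)| c(x,y) |x − y|^{−(d+α)} m(dy) belongs to L^p(E; m) for every p ∈ [1, ∞). -/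
open MeasureTheory Set


private lemma pow_rpow_comm (b : ℝ) (hb : 0 ≤ b) (k : ℕ) (t : ℝ) :
    (b ^ k) ^ t = (b ^ t) ^ k := by
  rw [← Real.rpow_natCast b k, ← Real.rpow_mul hb, mul_comm, Real.rpow_mul hb,
    Real.rpow_natCast]

private lemma my_lintegral_union_le {X : Type*} [MeasurableSpace X] (m : Measure X)
    (f : X → ENNReal) (s t : Set X) :
    ∫⁻ y in s ∪ t, f y ∂m ≤ (∫⁻ y in s, f y ∂m) + ∫⁻ y in t, f y ∂m := by
  calc ∫⁻ y in s ∪ t, f y ∂m ≤ ∫⁻ y, f y ∂(m.restrict s + m.restrict t) :=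
        lintegral_mono' (Measure.restrict_union_le s t) le_rfl
    _ = _ := lintegral_add_measure f _ _

/-- Dyadic estimate far from the center: if `m(B(x,r)) ≤ C₂ r^d` then
`∫_{dist ≥ ρ} dist^{-s} dm` is bounded by a constant independent of `x`, provided `s > d`. -/
private lemma far_aux {X : Type*} [MeasurableSpace X] [PseudoMetricSpace X]
    [OpensMeasurableSpace X] (m : Measure X) (C₂ d s ρ : ℝ) (hd : 0 < d) (hs : d < s)
    (hρ : 0 < ρ) (hC₂ : 0 ≤ C₂) :
    ∃ B : ENNReal, B < ⊤ ∧ ∀ x : X,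
      (∀ r : ℝ, 0 < r → m (Metric.ball x r) ≤ ENNReal.ofReal (C₂ * r ^ d)) →
      ∫⁻ y in {y | ρ ≤ dist x y}, ENNReal.ofReal (dist x y ^ (-s)) ∂m ≤ B := by
  set r : ℝ := (2 : ℝ) ^ (d - s) with hr
  have hr0 : 0 < r := Real.rpow_pos_of_pos two_pos _
  have hr1 : r < 1 := Real.rpow_lt_one_of_one_lt_of_neg one_lt_two (by linarith)
  set D : ℝ := ρ ^ (-s) * (C₂ * (ρ * 2) ^ d) with hD
  have hD0 : 0 ≤ D := by positivity
  refine ⟨ENNReal.ofReal D * (1 - ENNReal.ofReal r)⁻¹, ?_, ?_⟩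
  · exact ENNReal.mul_lt_top ENNReal.ofReal_lt_top
      (ENNReal.inv_lt_top.2 (tsub_pos_of_lt (ENNReal.ofReal_lt_one.2 hr1)))
  intro x hup
  set A : ℕ → Set X := fun k => {y | ρ * 2 ^ k ≤ dist x y ∧ dist x y < ρ * 2 ^ (k + 1)}
    with hA
  have hsub : {y | ρ ≤ dist x y} ⊆ ⋃ k, A k := by
    intro y hy
    have h1 : (1 : ℝ) ≤ dist x y / ρ := (one_le_div hρ).2 hy
    obtain ⟨k, hk1, hk2⟩ := exists_nat_pow_near h1 one_lt_two
    have hk1' : (2:ℝ) ^ k * ρ ≤ dist x y := (le_div_iff₀ hρ).1 hk1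
    have hk2' : dist x y < (2:ℝ) ^ (k + 1) * ρ := (div_lt_iff₀ hρ).1 hk2
    exact mem_iUnion.2 ⟨k, ⟨by linarith [hk1'], by linarith [hk2']⟩⟩
  have hterm : ∀ k : ℕ, ∫⁻ y in A k, ENNReal.ofReal (dist x y ^ (-s)) ∂m
      ≤ ENNReal.ofReal (D * r ^ k) := by
    intro k
    have hpos : (0 : ℝ) < ρ * 2 ^ k := by positivity
    have hAm : MeasurableSet (A k) := by
      have hdm : Measurable fun y : X => dist x y :=
        (continuous_const.dist continuous_id).measurable
      exact (measurableSet_le measurable_const hdm).inter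
        (measurableSet_lt hdm measurable_const)
    have hkey : (ρ * 2 ^ k) ^ (-s) * (C₂ * (ρ * 2 ^ (k + 1)) ^ d) = D * r ^ k := by
      have e1 : (ρ * 2 ^ k) ^ (-s) = ρ ^ (-s) * ((2:ℝ) ^ (-s)) ^ k := by
        rw [Real.mul_rpow hρ.le (by positivity), pow_rpow_comm 2 (by norm_num)]
      have e2 : (ρ * 2 ^ (k + 1)) ^ d = ρ ^ d * (((2:ℝ) ^ d) ^ k * (2:ℝ) ^ d) := by
        rw [Real.mul_rpow hρ.le (by positivity), pow_rpow_comm 2 (by norm_num), pow_succ]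
      have e3 : ∀ j : ℕ, r ^ j = ((2:ℝ) ^ d) ^ j * ((2:ℝ) ^ (-s)) ^ j := by
        intro j
        rw [hr, show d - s = d + (-s) by ring, Real.rpow_add two_pos, mul_pow]
      have e4 : (ρ * 2) ^ d = ρ ^ d * (2:ℝ) ^ d :=
        Real.mul_rpow hρ.le (by norm_num)
      rw [e1, e2, e3, hD, e4]; ring
    calc ∫⁻ y in A k, ENNReal.ofReal (dist x y ^ (-s)) ∂m
        ≤ ∫⁻ _y in A k, ENNReal.ofReal ((ρ * 2 ^ k) ^ (-s)) ∂m := by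
          refine lintegral_mono_ae ((ae_restrict_mem hAm).mono fun y hy => ?_)
          exact ENNReal.ofReal_le_ofReal
            (Real.rpow_le_rpow_of_nonpos hpos hy.1 (by linarith))
      _ = ENNReal.ofReal ((ρ * 2 ^ k) ^ (-s)) * m (A k) := setLIntegral_const _ _
      _ ≤ ENNReal.ofReal ((ρ * 2 ^ k) ^ (-s)) * ENNReal.ofReal (C₂ * (ρ * 2 ^ (k + 1)) ^ d) := by
          refine mul_le_mul_right ?_ _
          refine le_trans (measure_mono fun y hy => ?_) (hup (ρ * 2 ^ (k + 1)) (by positivity))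
          exact Metric.mem_ball'.2 hy.2
      _ = ENNReal.ofReal ((ρ * 2 ^ k) ^ (-s) * (C₂ * (ρ * 2 ^ (k + 1)) ^ d)) :=
          (ENNReal.ofReal_mul (by positivity)).symm
      _ = ENNReal.ofReal (D * r ^ k) := by rw [hkey]
  calc ∫⁻ y in {y | ρ ≤ dist x y}, ENNReal.ofReal (dist x y ^ (-s)) ∂m
      ≤ ∫⁻ y in ⋃ k, A k, ENNReal.ofReal (dist x y ^ (-s)) ∂m := lintegral_mono_set hsub
    _ ≤ ∑' k, ∫⁻ y in A k, ENNReal.ofReal (dist x y ^ (-s)) ∂m := lintegral_iUnion_le _ _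
    _ ≤ ∑' k, ENNReal.ofReal (D * r ^ k) := ENNReal.tsum_le_tsum hterm
    _ = ENNReal.ofReal D * (1 - ENNReal.ofReal r)⁻¹ := by
        simp_rw [ENNReal.ofReal_mul hD0, ENNReal.ofReal_pow hr0.le]
        rw [ENNReal.tsum_mul_left, ENNReal.tsum_geometric]

/-- Dyadic estimate near the center: if `m(B(x,r)) ≤ C₂ r^d` then
`∫_{B(x,1)} dist^{t} dm` is bounded by a constant independent of `x`, provided `t + d > 0`. -/
private lemma near_aux {X : Type*} [MeasurableSpace X] [PseudoMetricSpace X]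
    [OpensMeasurableSpace X] (m : Measure X) (C₂ d t : ℝ) (hd : 0 < d) (ht : 0 < t + d)
    (hC₂ : 0 ≤ C₂) :
    ∃ B : ENNReal, B < ⊤ ∧ ∀ x : X,
      (∀ r : ℝ, 0 < r → m (Metric.ball x r) ≤ ENNReal.ofReal (C₂ * r ^ d)) →
      ∫⁻ y in Metric.ball x 1, ENNReal.ofReal (dist x y ^ t) ∂m ≤ B := by
  set h : ℝ := 1 / 2 with hh
  have hh0 : (0 : ℝ) < h := by norm_num
  have hh1 : h < 1 := by norm_num
  set r : ℝ := h ^ (t + d) with hr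
  have hr0 : 0 < r := Real.rpow_pos_of_pos hh0 _
  have hr1 : r < 1 := Real.rpow_lt_one hh0.le hh1 ht
  set D : ℝ := max 1 (h ^ t) * (C₂ * (2 : ℝ) ^ d) with hD
  have hD0 : 0 ≤ D := by positivity
  refine ⟨ENNReal.ofReal C₂ + ENNReal.ofReal D * (1 - ENNReal.ofReal r)⁻¹, ?_, ?_⟩
  · exact ENNReal.add_lt_top.2 ⟨ENNReal.ofReal_lt_top,
      ENNReal.mul_lt_top ENNReal.ofReal_lt_top
        (ENNReal.inv_lt_top.2 (tsub_pos_of_lt (ENNReal.ofReal_lt_one.2 hr1)))⟩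
  intro x hup
  have hdm : Measurable fun y : X => dist x y :=
    (continuous_const.dist continuous_id).measurable
  set Z : Set X := {y | dist x y ≤ 0} with hZ
  set A : ℕ → Set X := fun k => {y | h ^ (k + 1) < dist x y ∧ dist x y ≤ h ^ k} with hA
  have hsub : Metric.ball x 1 ⊆ Z ∪ ⋃ k, A k := by
    intro y hy
    have hy1 : dist x y < 1 := by rw [dist_comm]; exact Metric.mem_ball.1 hy
    rcases le_or_gt (dist x y) 0 with h0 | h0
    · exact Or.inl h0
    · refine Or.inr ?_
      have h1 : (1 : ℝ) ≤ 1 / dist x y := by rw [le_div_iff₀ h0]; linarith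
      obtain ⟨k, hk1, hk2⟩ := exists_nat_pow_near h1 one_lt_two
      have hk1' : (2:ℝ) ^ k * dist x y ≤ 1 := by
        rw [le_div_iff₀ h0] at hk1; linarith
      have hk2' : (1:ℝ) < (2:ℝ) ^ (k + 1) * dist x y := by
        rw [div_lt_iff₀ h0] at hk2; linarith
      have hcancel : ∀ j : ℕ, h ^ j * (2:ℝ) ^ j = 1 := by
        intro j; rw [hh, ← mul_pow]; norm_num
      refine mem_iUnion.2 ⟨k, ?_, ?_⟩
      · have := hcancel (k + 1)
        nlinarith [pow_pos hh0 (k + 1), pow_pos (two_pos (α := ℝ)) (k + 1)]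
      · have := hcancel k
        nlinarith [pow_pos hh0 k, pow_pos (two_pos (α := ℝ)) k]
  have hZm : MeasurableSet Z := measurableSet_le hdm measurable_const
  have hZpiece : ∫⁻ y in Z, ENNReal.ofReal (dist x y ^ t) ∂m ≤ ENNReal.ofReal C₂ := by
    have h01 : ∀ y ∈ Z, ENNReal.ofReal (dist x y ^ t) ≤ 1 := by
      intro y hy
      have : dist x y = 0 := le_antisymm hy dist_nonneg
      rw [this]
      rcases eq_or_ne t 0 with h' | h'
      · simp [h']
      · simp [Real.zero_rpow h']
    calc ∫⁻ y in Z, ENNReal.ofReal (dist x y ^ t) ∂m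
        ≤ ∫⁻ _y in Z, 1 ∂m :=
          lintegral_mono_ae ((ae_restrict_mem hZm).mono fun y hy => h01 y hy)
      _ = m Z := by rw [setLIntegral_const, one_mul]
      _ ≤ m (Metric.ball x 1) := measure_mono fun y hy =>
          Metric.mem_ball'.2 (lt_of_le_of_lt hy one_pos)
      _ ≤ ENNReal.ofReal (C₂ * 1 ^ d) := hup 1 one_pos
      _ = ENNReal.ofReal C₂ := by rw [Real.one_rpow, mul_one]
  have hterm : ∀ k : ℕ, ∫⁻ y in A k, ENNReal.ofReal (dist x y ^ t) ∂m
      ≤ ENNReal.ofReal (D * r ^ k) := by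
    intro k
    have hAm : MeasurableSet (A k) :=
      (measurableSet_lt measurable_const hdm).inter (measurableSet_le hdm measurable_const)
    have hbd : ∀ y ∈ A k, dist x y ^ t ≤ max 1 (h ^ t) * (h ^ t) ^ k := by
      intro y hy
      have hpos : 0 < dist x y := lt_trans (pow_pos hh0 (k + 1)) hy.1
      rcases le_or_gt 0 t with h' | h'
      · calc dist x y ^ t ≤ (h ^ k) ^ t := Real.rpow_le_rpow dist_nonneg hy.2 h'
          _ = (h ^ t) ^ k := pow_rpow_comm h hh0.le k t
          _ ≤ max 1 (h ^ t) * (h ^ t) ^ k :=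
            le_mul_of_one_le_left (pow_nonneg (Real.rpow_nonneg hh0.le t) k) (le_max_left _ _)
      · calc dist x y ^ t ≤ (h ^ (k + 1)) ^ t :=
            Real.rpow_le_rpow_of_nonpos (pow_pos hh0 (k + 1)) hy.1.le h'.le
          _ = (h ^ t) ^ (k + 1) := pow_rpow_comm h hh0.le (k + 1) t
          _ = h ^ t * (h ^ t) ^ k := pow_succ' _ _
          _ ≤ max 1 (h ^ t) * (h ^ t) ^ k :=
            mul_le_mul_of_nonneg_right (le_max_right _ _)
              (pow_nonneg (Real.rpow_nonneg hh0.le t) k)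
    have hkey : max 1 (h ^ t) * (h ^ t) ^ k * (C₂ * ((2:ℝ) ^ d * (h ^ d) ^ k))
        = D * r ^ k := by
      have e3 : r ^ k = (h ^ t) ^ k * (h ^ d) ^ k := by
        rw [hr, Real.rpow_add hh0, mul_pow]
      rw [e3, hD]; ring
    calc ∫⁻ y in A k, ENNReal.ofReal (dist x y ^ t) ∂m
        ≤ ∫⁻ _y in A k, ENNReal.ofReal (max 1 (h ^ t) * (h ^ t) ^ k) ∂m := by
          refine lintegral_mono_ae ((ae_restrict_mem hAm).mono fun y hy => ?_)
          exact ENNReal.ofReal_le_ofReal (hbd y hy)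
      _ = ENNReal.ofReal (max 1 (h ^ t) * (h ^ t) ^ k) * m (A k) := setLIntegral_const _ _
      _ ≤ ENNReal.ofReal (max 1 (h ^ t) * (h ^ t) ^ k)
          * ENNReal.ofReal (C₂ * (2 * h ^ k) ^ d) := by
          refine mul_le_mul_right ?_ _
          refine le_trans (measure_mono fun y hy => ?_) (hup (2 * h ^ k) (by positivity))
          exact Metric.mem_ball'.2 (lt_of_le_of_lt hy.2 (by nlinarith [pow_pos hh0 k]))
      _ = ENNReal.ofReal (max 1 (h ^ t) * (h ^ t) ^ k * (C₂ * ((2:ℝ) ^ d * (h ^ d) ^ k))) := by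
          rw [← ENNReal.ofReal_mul (by positivity)]
          congr 2
          rw [Real.mul_rpow (by norm_num) (by positivity), pow_rpow_comm h hh0.le k d]
      _ = ENNReal.ofReal (D * r ^ k) := by rw [hkey]
  calc ∫⁻ y in Metric.ball x 1, ENNReal.ofReal (dist x y ^ t) ∂m
      ≤ ∫⁻ y in Z ∪ ⋃ k, A k, ENNReal.ofReal (dist x y ^ t) ∂m := lintegral_mono_set hsub
    _ ≤ (∫⁻ y in Z, ENNReal.ofReal (dist x y ^ t) ∂m)
        + ∫⁻ y in ⋃ k, A k, ENNReal.ofReal (dist x y ^ t) ∂m :=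
        my_lintegral_union_le m _ Z _
    _ ≤ ENNReal.ofReal C₂ + ENNReal.ofReal D * (1 - ENNReal.ofReal r)⁻¹ := by
        refine add_le_add hZpiece ?_
        calc ∫⁻ y in ⋃ k, A k, ENNReal.ofReal (dist x y ^ t) ∂m
            ≤ ∑' k, ∫⁻ y in A k, ENNReal.ofReal (dist x y ^ t) ∂m := lintegral_iUnion_le _ _
          _ ≤ ∑' k, ENNReal.ofReal (D * r ^ k) := ENNReal.tsum_le_tsum hterm
          _ = ENNReal.ofReal D * (1 - ENNReal.ofReal r)⁻¹ := by
              simp_rw [ENNReal.ofReal_mul hD0, ENNReal.ofReal_pow hr0.le]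
              rw [ENNReal.tsum_mul_left, ENNReal.tsum_geometric]

/-- On a global `d`-set `E ⊆ ℝⁿ` with `0 < α < 2`: if `F` is bounded Borel with
`|F(x,y)| ≤ c₀|x-y|^γ` (`γ > α`) and `F(x,y) = 0` for `y ∉ K` (`K` compact), then
`f(x) = ∫_E |F(x,y)| c(x,y)|x-y|^{-(d+α)} m(dy)` lies in `L^p(E;m)` for all `p ∈ [1,∞)`. -/
theorem stmt_13 (n : ℕ) (hn : 1 ≤ n) (d : ℝ) (hd0 : 0 < d) (hdn : d ≤ n)
    (E : Set (EuclideanSpace ℝ (Fin n))) (hE : MeasurableSet E) (hEne : E.Nonempty)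
    (m : Measure (EuclideanSpace ℝ (Fin n))) (hmE : m Eᶜ = 0)
    (C₁ C₂ : ℝ) (hC₁ : 0 < C₁) (hC₁₂ : C₁ ≤ C₂)
    (hlow : ∀ x ∈ E, ∀ r : ℝ, 0 < r → ENNReal.ofReal (C₁ * r ^ d) ≤ m (Metric.ball x r))
    (hup : ∀ x ∈ E, ∀ r : ℝ, 0 < r → m (Metric.ball x r) ≤ ENNReal.ofReal (C₂ * r ^ d))
    (α : ℝ) (hα0 : 0 < α) (hα2 : α < 2)
    (c : EuclideanSpace ℝ (Fin n) → EuclideanSpace ℝ (Fin n) → ℝ) (C₄ : ℝ)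
    (hc_meas : Measurable (fun q : EuclideanSpace ℝ (Fin n) × EuclideanSpace ℝ (Fin n) => c q.1 q.2))
    (hc0 : ∀ x y, 0 ≤ c x y) (hcC₄ : ∀ x y, c x y ≤ C₄)
    (K : Set (EuclideanSpace ℝ (Fin n))) (hK : IsCompact K)
    (γ c₀ : ℝ) (hγ : α < γ) (hc₀ : 0 < c₀)
    (F : EuclideanSpace ℝ (Fin n) → EuclideanSpace ℝ (Fin n) → ℝ)
    (hF_meas : Measurable (fun q : EuclideanSpace ℝ (Fin n) × EuclideanSpace ℝ (Fin n) => F q.1 q.2))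
    (hF_bd : ∃ M : ℝ, ∀ x y, |F x y| ≤ M)
    (hFγ : ∀ x y, |F x y| ≤ c₀ * dist x y ^ γ)
    (hFK : ∀ x y, y ∉ K → F x y = 0) :
    ∀ p : ℝ, 1 ≤ p →
      (∫⁻ x in E,
          (∫⁻ y in E, ENNReal.ofReal (|F x y| * c x y * dist x y ^ (-(d + α))) ∂m) ^ p
        ∂m) < ⊤ := by
  intro p hp
  obtain ⟨M, hM⟩ := hF_bd
  have hM0 : 0 ≤ M := le_trans (abs_nonneg _) (hM 0 0)
  have hC₄0 : 0 ≤ C₄ := le_trans (hc0 0 0) (hcC₄ 0 0)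
  have hC₂0 : 0 ≤ C₂ := le_trans hC₁.le hC₁₂
  obtain ⟨e, he⟩ := hEne
  obtain ⟨R, hR1, hKR⟩ := hK.isBounded.subset_ball_lt 1 e
  have hR0 : (0 : ℝ) < R := lt_trans one_pos hR1
  have hγ0 : 0 < γ := lt_trans hα0 hγ
  have hdα : 0 < d + α := by linarith
  have hp0 : (0 : ℝ) ≤ p := by linarith
  have h2R : (0 : ℝ) < 2 * R := by linarith
  obtain ⟨B₁, hB₁top, hB₁⟩ := near_aux m C₂ d (γ - (d + α)) hd0 (by linarith) hC₂0
  obtain ⟨B₂, hB₂top, hB₂⟩ := far_aux m C₂ d (d + α) 1 hd0 (by linarith) one_pos hC₂0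
  obtain ⟨B₃, hB₃top, hB₃⟩ := far_aux m C₂ d ((d + α) * p) (2 * R) hd0
    (by nlinarith) h2R hC₂0
  set f : EuclideanSpace ℝ (Fin n) → ENNReal := fun x =>
    ∫⁻ y in E, ENNReal.ofReal (|F x y| * c x y * dist x y ^ (-(d + α))) ∂m with hf
  -- uniform bound on E
  set A : ENNReal := ENNReal.ofReal (c₀ * C₄) * B₁ + ENNReal.ofReal (M * C₄) * B₂ with hA
  have hAtop : A < ⊤ := ENNReal.add_lt_top.2
    ⟨ENNReal.mul_lt_top ENNReal.ofReal_lt_top hB₁top,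
     ENNReal.mul_lt_top ENNReal.ofReal_lt_top hB₂top⟩
  have hfA : ∀ x ∈ E, f x ≤ A := by
    intro x hx
    have hb1 : ∀ y, ENNReal.ofReal (|F x y| * c x y * dist x y ^ (-(d + α)))
        ≤ ENNReal.ofReal (c₀ * C₄) * ENNReal.ofReal (dist x y ^ (γ - (d + α))) := by
      intro y
      rw [← ENNReal.ofReal_mul (by positivity)]
      apply ENNReal.ofReal_le_ofReal
      rcases eq_or_lt_of_le (dist_nonneg (x := x) (y := y)) with h0 | h0
      · have hd0' : dist x y = 0 := h0.symm
        have hF0 : |F x y| = 0 := le_antisymm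
          (by simpa [hd0', Real.zero_rpow (ne_of_gt hγ0)] using hFγ x y) (abs_nonneg _)
        rw [hF0, zero_mul, zero_mul]
        positivity
      · calc |F x y| * c x y * dist x y ^ (-(d + α))
            ≤ c₀ * dist x y ^ γ * C₄ * dist x y ^ (-(d + α)) :=
              mul_le_mul_of_nonneg_right
                (mul_le_mul (hFγ x y) (hcC₄ x y) (hc0 x y) (by positivity))
                (Real.rpow_nonneg dist_nonneg _)
          _ = c₀ * C₄ * (dist x y ^ γ * dist x y ^ (-(d + α))) := by ring
          _ = c₀ * C₄ * dist x y ^ (γ - (d + α)) := by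
              rw [← Real.rpow_add h0, show γ + -(d + α) = γ - (d + α) by ring]
    have hb2 : ∀ y, ENNReal.ofReal (|F x y| * c x y * dist x y ^ (-(d + α)))
        ≤ ENNReal.ofReal (M * C₄) * ENNReal.ofReal (dist x y ^ (-(d + α))) := by
      intro y
      rw [← ENNReal.ofReal_mul (by positivity)]
      exact ENNReal.ofReal_le_ofReal
        (mul_le_mul_of_nonneg_right
          (mul_le_mul (hM x y) (hcC₄ x y) (hc0 x y) hM0)
          (Real.rpow_nonneg dist_nonneg _))
    have hcompl : (Metric.ball x 1)ᶜ = {y | 1 ≤ dist x y} := by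
      ext z; simp [Metric.mem_ball, not_lt, dist_comm]
    calc f x ≤ ∫⁻ y, ENNReal.ofReal (|F x y| * c x y * dist x y ^ (-(d + α))) ∂m :=
          setLIntegral_le_lintegral E _
      _ = (∫⁻ y in Metric.ball x 1,
            ENNReal.ofReal (|F x y| * c x y * dist x y ^ (-(d + α))) ∂m)
          + ∫⁻ y in (Metric.ball x 1)ᶜ,
            ENNReal.ofReal (|F x y| * c x y * dist x y ^ (-(d + α))) ∂m :=
          (lintegral_add_compl _ measurableSet_ball).symm
      _ ≤ ENNReal.ofReal (c₀ * C₄) * B₁ + ENNReal.ofReal (M * C₄) * B₂ := by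
          refine add_le_add ?_ ?_
          · calc ∫⁻ y in Metric.ball x 1,
                ENNReal.ofReal (|F x y| * c x y * dist x y ^ (-(d + α))) ∂m
                ≤ ∫⁻ y in Metric.ball x 1,
                  ENNReal.ofReal (c₀ * C₄) * ENNReal.ofReal (dist x y ^ (γ - (d + α))) ∂m :=
                  lintegral_mono hb1
              _ = ENNReal.ofReal (c₀ * C₄) * ∫⁻ y in Metric.ball x 1,
                  ENNReal.ofReal (dist x y ^ (γ - (d + α))) ∂m :=
                  lintegral_const_mul' _ _ ENNReal.ofReal_ne_top
              _ ≤ ENNReal.ofReal (c₀ * C₄) * B₁ :=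
                  mul_le_mul_right (hB₁ x (fun r hr => hup x hx r hr)) _
          · calc ∫⁻ y in (Metric.ball x 1)ᶜ,
                ENNReal.ofReal (|F x y| * c x y * dist x y ^ (-(d + α))) ∂m
                ≤ ∫⁻ y in (Metric.ball x 1)ᶜ,
                  ENNReal.ofReal (M * C₄) * ENNReal.ofReal (dist x y ^ (-(d + α))) ∂m :=
                  lintegral_mono hb2
              _ = ENNReal.ofReal (M * C₄) * ∫⁻ y in (Metric.ball x 1)ᶜ,
                  ENNReal.ofReal (dist x y ^ (-(d + α))) ∂m :=
                  lintegral_const_mul' _ _ ENNReal.ofReal_ne_top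
              _ ≤ ENNReal.ofReal (M * C₄) * B₂ := by
                  rw [hcompl]
                  exact mul_le_mul_right (hB₂ x (fun r hr => hup x hx r hr)) _
      _ = A := rfl
  -- decay bound
  set D : ℝ := M * C₄ * (2 : ℝ) ^ (d + α) * (C₂ * R ^ d) with hD
  have hD0 : 0 ≤ D := by positivity
  have hdecay : ∀ x, 2 * R ≤ dist e x →
      f x ≤ ENNReal.ofReal (D * dist e x ^ (-(d + α))) := by
    intro x hx
    have hex : 0 < dist e x := lt_of_lt_of_le h2R hx
    have hpt : ∀ y, ENNReal.ofReal (|F x y| * c x y * dist x y ^ (-(d + α)))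
        ≤ K.indicator (fun _ => ENNReal.ofReal
          (M * C₄ * (2 : ℝ) ^ (d + α) * dist e x ^ (-(d + α)))) y := by
      intro y
      by_cases hy : y ∈ K
      · rw [Set.indicator_of_mem hy]
        apply ENNReal.ofReal_le_ofReal
        have hyK : dist y e < R := Metric.mem_ball.1 (hKR hy)
        have h2 : dist e x / 2 ≤ dist x y := by
          have htri : dist e x ≤ dist e y + dist y x := dist_triangle e y x
          have hc1 : dist e y = dist y e := dist_comm e y
          have hc2 : dist y x = dist x y := dist_comm y x
          linarith
        have hpos2 : 0 < dist e x / 2 := by linarith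
        have hr1 : dist x y ^ (-(d + α)) ≤ (dist e x / 2) ^ (-(d + α)) :=
          Real.rpow_le_rpow_of_nonpos hpos2 h2 (by linarith)
        have hr2 : (dist e x / 2) ^ (-(d + α)) = (2:ℝ) ^ (d + α) * dist e x ^ (-(d + α)) := by
          rw [Real.div_rpow dist_nonneg (by norm_num : (0:ℝ) ≤ 2), div_eq_mul_inv,
            Real.rpow_neg (by norm_num : (0:ℝ) ≤ 2), inv_inv, mul_comm]
        calc |F x y| * c x y * dist x y ^ (-(d + α))
            ≤ M * C₄ * ((dist e x / 2) ^ (-(d + α))) :=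
              mul_le_mul (mul_le_mul (hM x y) (hcC₄ x y) (hc0 x y) hM0) hr1
                (Real.rpow_nonneg dist_nonneg _) (by positivity)
          _ = M * C₄ * (2:ℝ) ^ (d + α) * dist e x ^ (-(d + α)) := by rw [hr2]; ring
      · rw [Set.indicator_of_notMem hy, hFK x y hy]
        simp
    calc f x ≤ ∫⁻ y in E, K.indicator (fun _ => ENNReal.ofReal
          (M * C₄ * (2:ℝ) ^ (d + α) * dist e x ^ (-(d + α)))) y ∂m := lintegral_mono hpt
      _ = ∫⁻ _y in K, ENNReal.ofReal
          (M * C₄ * (2:ℝ) ^ (d + α) * dist e x ^ (-(d + α))) ∂(m.restrict E) :=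
          lintegral_indicator hK.measurableSet _
      _ = ENNReal.ofReal (M * C₄ * (2:ℝ) ^ (d + α) * dist e x ^ (-(d + α)))
          * (m.restrict E) K := setLIntegral_const _ _
      _ ≤ ENNReal.ofReal (M * C₄ * (2:ℝ) ^ (d + α) * dist e x ^ (-(d + α)))
          * ENNReal.ofReal (C₂ * R ^ d) := by
          refine mul_le_mul_right ?_ _
          rw [Measure.restrict_apply hK.measurableSet]
          exact le_trans (measure_mono (inter_subset_left.trans hKR)) (hup e he R hR0)
      _ = ENNReal.ofReal (D * dist e x ^ (-(d + α))) := by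
          rw [← ENNReal.ofReal_mul (by positivity)]
          congr 1; rw [hD]; ring
  -- combine
  have hgoal : (∫⁻ x in E,
      (∫⁻ y in E, ENNReal.ofReal (|F x y| * c x y * dist x y ^ (-(d + α))) ∂m) ^ p ∂m)
      = ∫⁻ x, (f x) ^ p ∂(m.restrict E) := rfl
  rw [hgoal, ← lintegral_add_compl (fun x => (f x) ^ p)
    (measurableSet_ball (x := e) (ε := 2 * R))]
  refine ENNReal.add_lt_top.2 ⟨?_, ?_⟩
  · -- near piece
    have hres : (m.restrict E).restrict (Metric.ball e (2 * R))
        = m.restrict (Metric.ball e (2 * R) ∩ E) :=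
      Measure.restrict_restrict measurableSet_ball
    calc ∫⁻ x in Metric.ball e (2 * R), (f x) ^ p ∂(m.restrict E)
        = ∫⁻ x, (f x) ^ p ∂(m.restrict (Metric.ball e (2 * R) ∩ E)) := by rw [hres]
      _ ≤ ∫⁻ _x, A ^ p ∂(m.restrict (Metric.ball e (2 * R) ∩ E)) :=
          lintegral_mono_ae ((ae_restrict_mem (measurableSet_ball.inter hE)).mono
            fun x hx => ENNReal.rpow_le_rpow (hfA x hx.2) hp0)
      _ = A ^ p * m (Metric.ball e (2 * R) ∩ E) := by
          rw [lintegral_const, Measure.restrict_apply_univ]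
      _ ≤ A ^ p * ENNReal.ofReal (C₂ * (2 * R) ^ d) :=
          mul_le_mul_right ((measure_mono inter_subset_left).trans (hup e he (2 * R) h2R)) _
      _ < ⊤ := ENNReal.mul_lt_top
          (ENNReal.rpow_lt_top_of_nonneg hp0 hAtop.ne) ENNReal.ofReal_lt_top
  · -- far piece
    have hcompl : (Metric.ball e (2 * R))ᶜ = {x | 2 * R ≤ dist e x} := by
      ext z; simp [Metric.mem_ball, not_lt, dist_comm]
    calc ∫⁻ x in (Metric.ball e (2 * R))ᶜ, (f x) ^ p ∂(m.restrict E)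
        ≤ ∫⁻ x in (Metric.ball e (2 * R))ᶜ,
            ENNReal.ofReal (D ^ p) * ENNReal.ofReal (dist e x ^ (-((d + α) * p)))
            ∂(m.restrict E) := by
          refine lintegral_mono_ae
            ((ae_restrict_mem measurableSet_ball.compl).mono fun x hx => ?_)
          have hx' : 2 * R ≤ dist e x := by
            rw [hcompl] at hx; exact hx
          have hxpos : 0 < dist e x := lt_of_lt_of_le h2R hx'
          calc (f x) ^ p ≤ (ENNReal.ofReal (D * dist e x ^ (-(d + α)))) ^ p :=
                ENNReal.rpow_le_rpow (hdecay x hx') hp0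
            _ = ENNReal.ofReal ((D * dist e x ^ (-(d + α))) ^ p) :=
                ENNReal.ofReal_rpow_of_nonneg (by positivity) hp0
            _ = ENNReal.ofReal (D ^ p) * ENNReal.ofReal (dist e x ^ (-((d + α) * p))) := by
                rw [Real.mul_rpow hD0 (Real.rpow_nonneg dist_nonneg _),
                  ← Real.rpow_mul dist_nonneg, neg_mul,
                  ENNReal.ofReal_mul (by positivity)]
      _ = ENNReal.ofReal (D ^ p) * ∫⁻ x in (Metric.ball e (2 * R))ᶜ,
            ENNReal.ofReal (dist e x ^ (-((d + α) * p))) ∂(m.restrict E) :=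
          lintegral_const_mul' _ _ ENNReal.ofReal_ne_top
      _ ≤ ENNReal.ofReal (D ^ p) * ∫⁻ x in {x | 2 * R ≤ dist e x},
            ENNReal.ofReal (dist e x ^ (-((d + α) * p))) ∂m := by
          refine mul_le_mul_right ?_ _
          rw [← hcompl]
          exact lintegral_mono' (Measure.restrict_mono subset_rfl Measure.restrict_le_self)
            le_rfl
      _ ≤ ENNReal.ofReal (D ^ p) * B₃ :=
          mul_le_mul_right (hB₃ e (fun r hr => hup e he r hr)) _
      _ < ⊤ := ENNReal.mul_lt_top ENNReal.ofReal_lt_top hB₃top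
end

section
/- Let (E, 𝓔) be a measurable space, m a σ-finite measure on E, and κ a kernel from E to E such that M := sup_{x ∈ E} κ(x, E) < ∞ and such that the measure m ⊗ κ on E × E (defined by (m ⊗ κ)(A) = ∫_E κ(x, {y : (x,y) ∈ A}) m(dx)) is invariant under the coordinate swap (x,y) ↦ (y,x). Then for every nonnegative measurable function f on E, ∫_E ( ∫_E f(y) κ(x,dy) )² m(dx) ≤ M² · ∫_E f(x)² m(dx). -/
open MeasureTheory ProbabilityTheory
open scoped ENNReal

/- Write `T f x = ∫ f dκ(x)`. Pointwise Cauchy–Schwarz gives `(T f)² ≤ κ(x, E) · T(f²) ≤ M · T(f²)`,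
and the swap invariance of `m ⊗ κ` moves `f²` from the second coordinate to the first, so
`∫ T(f²) dm = ∫ κ(x, E) f² dm ≤ M ∫ f² dm`. -/

theorem ENNReal.sq_lintegral_le_measure_univ_mul {α : Type*} [MeasurableSpace α]
    (μ : Measure α) {f : α → ℝ≥0∞} (hf : AEMeasurable f μ) :
    (∫⁻ x, f x ∂μ) ^ 2 ≤ μ Set.univ * ∫⁻ x, f x ^ 2 ∂μ := by
  have holder := ENNReal.lintegral_mul_le_Lp_mul_Lq μ .two_two hf aemeasurable_const
    (g := fun _ ↦ 1)
  simp only [Pi.mul_apply, mul_one, one_pow, one_mul, lintegral_const, ENNReal.rpow_two] at holder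
  calc (∫⁻ x, f x ∂μ) ^ 2
      ≤ ((∫⁻ x, f x ^ 2 ∂μ) ^ (1 / 2 : ℝ) * μ Set.univ ^ (1 / 2 : ℝ)) ^ 2 := by gcongr
    _ = μ Set.univ * ∫⁻ x, f x ^ 2 ∂μ := by
      rw [mul_pow, ← ENNReal.rpow_two, ← ENNReal.rpow_two, ← ENNReal.rpow_mul,
        ← ENNReal.rpow_mul]
      norm_num [mul_comm]

section SymmetricKernel

variable {α : Type*} [MeasurableSpace α] {μ : Measure α} [SFinite μ]
  {κ : Kernel α α} [IsSFiniteKernel κ]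

theorem lintegral_lintegral_swap_of_map_swap_compProd
    (hsym : (μ.compProd κ).map Prod.swap = μ.compProd κ)
    {g : α × α → ℝ≥0∞} (hg : Measurable g) :
    ∫⁻ x, ∫⁻ y, g (x, y) ∂κ x ∂μ = ∫⁻ x, ∫⁻ y, g (y, x) ∂κ x ∂μ := by
  rw [← Measure.lintegral_compProd hg, ← hsym, lintegral_map hg measurable_swap,
    Measure.lintegral_compProd (f := fun p ↦ g p.swap) (hg.comp measurable_swap)]
  rfl

theorem lintegral_lintegral_kernel_le_of_map_swap_compProd
    (hsym : (μ.compProd κ).map Prod.swap = μ.compProd κ)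
    {M : ℝ≥0∞} (hκM : ∀ x, κ x Set.univ ≤ M) {g : α → ℝ≥0∞} (hg : Measurable g) :
    ∫⁻ x, ∫⁻ y, g y ∂κ x ∂μ ≤ M * ∫⁻ x, g x ∂μ := by
  calc ∫⁻ x, ∫⁻ y, g y ∂κ x ∂μ = ∫⁻ x, κ x Set.univ * g x ∂μ := by
        rw [lintegral_lintegral_swap_of_map_swap_compProd hsym (g := fun p ↦ g p.2)
          (hg.comp measurable_snd)]
        simp_rw [lintegral_const, mul_comm]
    _ ≤ ∫⁻ x, M * g x ∂μ := by gcongr with x; exact hκM x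
    _ = M * ∫⁻ x, g x ∂μ := lintegral_const_mul M hg

end SymmetricKernel

theorem stmt_14_general {E : Type*} [MeasurableSpace E] (m : Measure E) [SigmaFinite m]
    (κ : Kernel E E) [IsSFiniteKernel κ]
    (M : ℝ≥0∞) (hκM : ∀ x, κ x Set.univ ≤ M)
    (hsym : (m.compProd κ).map Prod.swap = m.compProd κ)
    (f : E → ℝ≥0∞) (hf : Measurable f) :
    ∫⁻ x, (∫⁻ y, f y ∂(κ x)) ^ 2 ∂m ≤ M ^ 2 * ∫⁻ x, (f x) ^ 2 ∂m := by
  have hf2 : Measurable fun y ↦ f y ^ 2 := hf.pow_const 2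
  calc ∫⁻ x, (∫⁻ y, f y ∂(κ x)) ^ 2 ∂m
      ≤ ∫⁻ x, M * ∫⁻ y, f y ^ 2 ∂(κ x) ∂m := by
        gcongr with x
        exact (ENNReal.sq_lintegral_le_measure_univ_mul (κ x) hf.aemeasurable).trans
          (mul_le_mul_left (hκM x) _)
    _ = M * ∫⁻ x, ∫⁻ y, f y ^ 2 ∂(κ x) ∂m :=
        lintegral_const_mul M (hf2.comp measurable_snd).lintegral_kernel_prod_right'
    _ ≤ M * (M * ∫⁻ x, f x ^ 2 ∂m) := by
        gcongr
        exact lintegral_lintegral_kernel_le_of_map_swap_compProd hsym hκM hf2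
    _ = M ^ 2 * ∫⁻ x, (f x) ^ 2 ∂m := by ring

/-- Abstract Cauchy–Schwarz/symmetry bound: if `κ` is a kernel with total masses
bounded by `M` and `m ⊗ κ` is invariant under the coordinate swap, then
`∫ (∫ f dκ(x))² dm ≤ M² ∫ f² dm` for every nonnegative measurable `f`. -/
theorem stmt_14 {E : Type*} [MeasurableSpace E] (m : Measure E) [SigmaFinite m]
    (κ : Kernel E E) [IsSFiniteKernel κ]
    (M : ℝ≥0∞) (hM : M < ⊤) (hκM : ∀ x, κ x Set.univ ≤ M)
    (hsym : (m.compProd κ).map Prod.swap = m.compProd κ)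
    (f : E → ℝ≥0∞) (hf : Measurable f) :
    ∫⁻ x, (∫⁻ y, f y ∂(κ x)) ^ 2 ∂m ≤ M ^ 2 * ∫⁻ x, (f x) ^ 2 ∂m :=
  stmt_14_general m κ M hκM hsym f hf
end

section
/- Assume the global d-set condition, let 0 < α < d, let g(r) := min( r^{α−d}, r^{−(d+α)} ) for r > 0, let p > d/α, and let f ∈ L^p(E; m). Then: (a) there is a constant C (depending only on C₂, d, α, p) such that sup_{x ∈ E} ∫_E g(|x − y|) |f(y)| m(dy) ≤ C ‖f‖_{L^p(E;m)}; (b) lim_{R→∞} sup_{x ∈ E} ∫_{E∖B(0,R)} g(|x − y|) |f(y)| m(dy) = 0; (c) for every ε > 0 there exists δ > 0 such that for every Borel set B ⊆ ℝⁿ with m(B) < δ, sup_{x ∈ E} ∫_B g(|x − y|) |f(y)| m(dy) < ε. -/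
open MeasureTheory Set Filter Topology Metric
open scoped ENNReal

/-!
By Hölder's inequality with the conjugate exponent `q` of `p`, all three claims reduce to a bound
on `‖g(|x - ·|)‖_{L^q(m)}` that is uniform in `x ∈ E`. Cutting space into the dyadic shells
`2^k ≤ |x - y| < 2^(k+1)`, `k ∈ ℤ`, and using `m(B(x, 2^(k+1))) ≤ C₂ 2^((k+1)d)`, the `q`-th
power of this norm is dominated by a two-sided geometric series; it converges because
`(d - α) q < d` (this is `p > d/α`) and `(d + α) q > d`. Then (b) and (c) follow because
`‖f‖_{L^p(m|_B)}` is small when `B` lies outside a large ball or has small measure.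
-/

section DyadicShells

variable {X : Type*} [PseudoMetricSpace X] [MeasurableSpace X] [OpensMeasurableSpace X]

theorem lintegral_comp_dist_le_tsum_dyadic (μ : Measure X) (x : X) {φ : ℝ → ℝ≥0∞}
    (hφ : AntitoneOn φ (Ioi 0)) (hφ0 : φ 0 = 0) :
    ∫⁻ y, φ (dist x y) ∂μ ≤ ∑' k : ℤ, φ (2 ^ k) * μ (ball x (2 ^ (k + 1))) := by
  set A : ℤ → Set X := fun k => ball x (2 ^ (k + 1)) \ ball x (2 ^ k)
  have hcover : (fun y => φ (dist x y)).support ⊆ ⋃ k, A k := by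
    intro y hy
    have hxy : 0 < dist x y := dist_nonneg.lt_of_ne fun h => hy (by simp [← h, hφ0])
    obtain ⟨k, hk₁, hk₂⟩ := exists_mem_Ico_zpow hxy one_lt_two
    exact mem_iUnion.2 ⟨k, by simpa [A, dist_comm] using hk₂, by simpa [A, dist_comm] using hk₁⟩
  calc ∫⁻ y, φ (dist x y) ∂μ = ∫⁻ y in ⋃ k, A k, φ (dist x y) ∂μ :=
        (setLIntegral_eq_of_support_subset hcover).symm
    _ ≤ ∑' k, ∫⁻ y in A k, φ (dist x y) ∂μ := lintegral_iUnion_le _ _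
    _ ≤ ∑' k, ∫⁻ _ in A k, φ (2 ^ k) ∂μ := by
        refine ENNReal.tsum_le_tsum fun k =>
          setLIntegral_mono' (measurableSet_ball.diff measurableSet_ball) fun y hy => ?_
        have hk : (2 : ℝ) ^ k ≤ dist x y := by simpa [A, dist_comm] using hy.2
        exact hφ (mem_Ioi.2 (zpow_pos two_pos k))
          (mem_Ioi.2 ((zpow_pos two_pos k).trans_le hk)) hk
    _ ≤ ∑' k : ℤ, φ (2 ^ k) * μ (ball x (2 ^ (k + 1))) := by
        refine ENNReal.tsum_le_tsum fun k => ?_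
        rw [setLIntegral_const]
        gcongr
        exact sdiff_subset

end DyadicShells

theorem summable_of_le_rpow_int {f : ℤ → ℝ} {b s t : ℝ} (hb : 1 < b) (hs : 0 < s) (ht : t < 0)
    (hf0 : ∀ k, 0 ≤ f k) (hfs : ∀ k : ℤ, f k ≤ b ^ (s * k)) (hft : ∀ k : ℤ, f k ≤ b ^ (t * k)) :
    Summable f := by
  have hgeom : ∀ u : ℝ, u < 0 → Summable fun n : ℕ => b ^ (u * n) := by
    intro u hu
    simp_rw [Real.rpow_mul (zero_le_one.trans hb.le), Real.rpow_natCast]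
    exact summable_geometric_of_lt_one (by positivity) (Real.rpow_lt_one_of_one_lt_of_neg hb hu)
  refine .of_nat_of_neg ((hgeom t ht).of_nonneg_of_le (fun n => hf0 n) fun n => ?_)
    ((hgeom (-s) (neg_neg_of_pos hs)).of_nonneg_of_le (fun n => hf0 _) fun n => ?_)
  · simpa using hft n
  · simpa using hfs (-n)

noncomputable def resolventProfile (α d r : ℝ) : ℝ := min (r ^ (α - d)) (r ^ (-(d + α)))

theorem resolventProfile_nonneg (α d : ℝ) {r : ℝ} (hr : 0 ≤ r) : 0 ≤ resolventProfile α d r :=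
  le_min (Real.rpow_nonneg hr _) (Real.rpow_nonneg hr _)

-- Since `0 ^ s = 0` for `s ≠ 0` in Lean, the diagonal `y = x` contributes nothing to the integrals.
theorem resolventProfile_zero {α d : ℝ} (h : α ≠ d) : resolventProfile α d 0 = 0 := by
  rw [resolventProfile, Real.zero_rpow (sub_ne_zero.2 h)]
  exact min_eq_left (Real.rpow_nonneg le_rfl _)

theorem resolventProfile_antitoneOn {α d : ℝ} (hαd : α ≤ d) (hdα : 0 ≤ d + α) :
    AntitoneOn (resolventProfile α d) (Ioi 0) := fun r hr _ _ hrr' =>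
  min_le_min (Real.rpow_le_rpow_of_nonpos hr hrr' (by linarith))
    (Real.rpow_le_rpow_of_nonpos hr hrr' (by linarith))

theorem resolventProfile_rpow_le_left (α d : ℝ) {q r : ℝ} (hr : 0 ≤ r) (hq : 0 ≤ q) :
    resolventProfile α d r ^ q ≤ r ^ ((α - d) * q) := by
  rw [Real.rpow_mul hr]
  exact Real.rpow_le_rpow (resolventProfile_nonneg α d hr) (min_le_left _ _) hq

theorem resolventProfile_rpow_le_right (α d : ℝ) {q r : ℝ} (hr : 0 ≤ r) (hq : 0 ≤ q) :
    resolventProfile α d r ^ q ≤ r ^ (-(d + α) * q) := by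
  rw [Real.rpow_mul hr]
  exact Real.rpow_le_rpow (resolventProfile_nonneg α d hr) (min_le_right _ _) hq

theorem resolventProfile_two_zpow_rpow_nonneg (α d q : ℝ) (k : ℤ) :
    0 ≤ resolventProfile α d (2 ^ k) ^ q :=
  Real.rpow_nonneg (resolventProfile_nonneg α d (zpow_pos two_pos k).le) q

theorem summable_resolventProfile_rpow_mul {α d q : ℝ} (hq : 0 ≤ q) (hnear : (d - α) * q < d)
    (hfar : d < (d + α) * q) :
    Summable fun k : ℤ => resolventProfile α d (2 ^ k) ^ q * ((2 : ℝ) ^ k) ^ d := by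
  have hpow : ∀ (e : ℝ) (k : ℤ), ((2 : ℝ) ^ k) ^ e * ((2 : ℝ) ^ k) ^ d = 2 ^ ((e + d) * k) := by
    intro e k
    rw [← Real.rpow_add (zpow_pos two_pos k), ← Real.rpow_intCast, ← Real.rpow_mul zero_le_two,
      mul_comm]
  refine summable_of_le_rpow_int one_lt_two (s := (α - d) * q + d) (t := -(d + α) * q + d)
    (by linarith) (by linarith) (fun k => ?_) (fun k => ?_) (fun k => ?_)
  · exact mul_nonneg (resolventProfile_two_zpow_rpow_nonneg α d q k) (by positivity)
  · rw [← hpow]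
    gcongr
    exact resolventProfile_rpow_le_left α d (zpow_pos two_pos k).le hq
  · rw [← hpow]
    gcongr
    exact resolventProfile_rpow_le_right α d (zpow_pos two_pos k).le hq

noncomputable def resolventLqConst (C d α q : ℝ) : ℝ :=
  C * 2 ^ d * ∑' k : ℤ, resolventProfile α d (2 ^ k) ^ q * ((2 : ℝ) ^ k) ^ d

theorem resolventLqConst_nonneg {C : ℝ} (hC : 0 ≤ C) (d α q : ℝ) :
    0 ≤ resolventLqConst C d α q :=
  mul_nonneg (by positivity) (tsum_nonneg fun k =>
    mul_nonneg (resolventProfile_two_zpow_rpow_nonneg α d q k) (by positivity))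

section UniformKernelBound

variable {X : Type*} [PseudoMetricSpace X] [MeasurableSpace X] [OpensMeasurableSpace X]
  (μ : Measure X) (x : X) {C d α q : ℝ}

theorem lintegral_resolventProfile_rpow_le (hC : 0 ≤ C)
    (hup : ∀ r : ℝ, 0 < r → μ (ball x r) ≤ ENNReal.ofReal (C * r ^ d))
    (hα : 0 < α) (hαd : α < d) (hq : 0 < q) (hnear : (d - α) * q < d) (hfar : d < (d + α) * q) :
    ∫⁻ y, ENNReal.ofReal (resolventProfile α d (dist x y) ^ q) ∂μ
      ≤ ENNReal.ofReal (resolventLqConst C d α q) := by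
  have hφ : AntitoneOn (fun r => ENNReal.ofReal (resolventProfile α d r ^ q)) (Ioi 0) :=
    fun r hr r' hr' hrr' => ENNReal.ofReal_le_ofReal <|
      Real.rpow_le_rpow (resolventProfile_nonneg α d (le_of_lt hr'))
        (resolventProfile_antitoneOn hαd.le (by linarith) hr hr' hrr') hq.le
  have hφ0 : ENNReal.ofReal (resolventProfile α d 0 ^ q) = 0 := by
    rw [resolventProfile_zero hαd.ne, Real.zero_rpow hq.ne', ENNReal.ofReal_zero]
  have hball : ∀ k : ℤ,
      μ (ball x (2 ^ (k + 1))) ≤ ENNReal.ofReal (C * 2 ^ d * ((2 : ℝ) ^ k) ^ d) := by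
    intro k
    convert hup (2 ^ (k + 1)) (by positivity) using 2
    rw [zpow_add_one₀ two_ne_zero, Real.mul_rpow (zpow_pos two_pos k).le zero_le_two]
    ring
  calc ∫⁻ y, ENNReal.ofReal (resolventProfile α d (dist x y) ^ q) ∂μ
      ≤ ∑' k : ℤ, ENNReal.ofReal (resolventProfile α d (2 ^ k) ^ q) * μ (ball x (2 ^ (k + 1))) :=
        lintegral_comp_dist_le_tsum_dyadic μ x hφ hφ0
    _ ≤ ∑' k : ℤ, ENNReal.ofReal
          (C * 2 ^ d * (resolventProfile α d (2 ^ k) ^ q * ((2 : ℝ) ^ k) ^ d)) := by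
        refine ENNReal.tsum_le_tsum fun k => ?_
        rw [mul_left_comm (C * 2 ^ d),
          ENNReal.ofReal_mul (resolventProfile_two_zpow_rpow_nonneg α d q k)]
        gcongr
        exact hball k
    _ = ENNReal.ofReal (resolventLqConst C d α q) := by
        rw [resolventLqConst, ← tsum_mul_left, ENNReal.ofReal_tsum_of_nonneg]
        · exact fun k => mul_nonneg (by positivity)
            (mul_nonneg (resolventProfile_two_zpow_rpow_nonneg α d q k) (by positivity))
        · exact (summable_resolventProfile_rpow_mul hq.le hnear hfar).mul_left _

theorem eLpNorm_resolventProfile_dist_le (hC : 0 ≤ C)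
    (hup : ∀ r : ℝ, 0 < r → μ (ball x r) ≤ ENNReal.ofReal (C * r ^ d))
    (hα : 0 < α) (hαd : α < d) (hq : 0 < q) (hnear : (d - α) * q < d) (hfar : d < (d + α) * q) :
    eLpNorm (fun y => resolventProfile α d (dist x y)) (ENNReal.ofReal q) μ
      ≤ ENNReal.ofReal (resolventLqConst C d α q ^ (1 / q)) := by
  rw [eLpNorm_eq_lintegral_rpow_enorm_toReal (by simpa using hq) ENNReal.ofReal_ne_top,
    ENNReal.toReal_ofReal hq.le,
    ← ENNReal.ofReal_rpow_of_nonneg (resolventLqConst_nonneg hC d α q) (by positivity)]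
  gcongr
  refine le_of_eq_of_le (lintegral_congr fun y => ?_)
    (lintegral_resolventProfile_rpow_le μ x hC hup hα hαd hq hnear hfar)
  rw [Real.enorm_eq_ofReal (resolventProfile_nonneg α d dist_nonneg),
    ENNReal.ofReal_rpow_of_nonneg (resolventProfile_nonneg α d dist_nonneg) hq.le]

theorem lintegral_resolventProfile_mul_le (hC : 0 ≤ C)
    (hup : ∀ r : ℝ, 0 < r → μ (ball x r) ≤ ENNReal.ofReal (C * r ^ d))
    (hα : 0 < α) (hαd : α < d) {p : ℝ} (hpq : p.HolderConjugate q) (hnear : (d - α) * q < d)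
    (hfar : d < (d + α) * q) {f : X → ℝ} (hf : AEStronglyMeasurable f μ) (s : Set X) :
    ∫⁻ y in s, ENNReal.ofReal (resolventProfile α d (dist x y) * |f y|) ∂μ
      ≤ ENNReal.ofReal (resolventLqConst C d α q ^ (1 / q))
        * eLpNorm f (ENNReal.ofReal p) (μ.restrict s) := by
  set G : X → ℝ := fun y => resolventProfile α d (dist x y)
  have hdist : Measurable (dist x) := (continuous_const.dist continuous_id).measurable
  have hG : Measurable G := (hdist.pow_const _).min (hdist.pow_const _)
  have := hpq.symm.ennrealOfReal
  calc ∫⁻ y in s, ENNReal.ofReal (G y * |f y|) ∂μ = eLpNorm (G • f) 1 (μ.restrict s) := by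
        rw [eLpNorm_one_eq_lintegral_enorm]
        refine lintegral_congr fun y => ?_
        rw [show (G • f) y = G y * f y from rfl, Real.enorm_eq_ofReal_abs, abs_mul,
          abs_of_nonneg (resolventProfile_nonneg α d dist_nonneg)]
    _ ≤ eLpNorm G (ENNReal.ofReal q) (μ.restrict s)
          * eLpNorm f (ENNReal.ofReal p) (μ.restrict s) :=
        eLpNorm_smul_le_mul_eLpNorm hf.restrict hG.aestronglyMeasurable
    _ ≤ _ := by
        gcongr
        exact (eLpNorm_mono_measure _ Measure.restrict_le_self).trans
          (eLpNorm_resolventProfile_dist_le μ x hC hup hα hαd hpq.symm.pos hnear hfar)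

end UniformKernelBound

theorem MeasureTheory.MemLp.tendsto_eLpNorm_restrict_compl_ball {X F : Type*}
    [PseudoMetricSpace X] [MeasurableSpace X] [OpensMeasurableSpace X] [NormedAddCommGroup F]
    {μ : Measure X} {p : ℝ≥0∞} (hp0 : p ≠ 0) (hp : p ≠ ∞) {f : X → F} (hf : MemLp f p μ) (x₀ : X) :
    Tendsto (fun R : ℝ => eLpNorm f p (μ.restrict (ball x₀ R)ᶜ)) atTop (𝓝 0) := by
  set ν := μ.withDensity fun y => ‖f y‖ₑ ^ p.toReal
  have hν : ∀ R : ℝ, eLpNorm f p (μ.restrict (ball x₀ R)ᶜ) = ν (ball x₀ R)ᶜ ^ (1 / p.toReal) :=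
    fun R => by
      rw [eLpNorm_eq_lintegral_rpow_enorm_toReal hp0 hp,
        withDensity_apply _ measurableSet_ball.compl]
  have hνuniv : ν univ ≠ ∞ := by
    rw [withDensity_apply _ MeasurableSet.univ, Measure.restrict_univ]
    exact (lintegral_rpow_enorm_lt_top_of_eLpNorm_lt_top hp0 hp hf.eLpNorm_lt_top).ne
  have hempty : ⋂ R : ℝ, (ball x₀ R)ᶜ = ∅ :=
    eq_empty_iff_forall_notMem.2 fun y hy =>
      mem_iInter.1 hy (dist y x₀ + 1) (mem_ball.2 (lt_add_one _))
  have hlim := tendsto_measure_iInter_atTop (μ := ν) (s := fun R : ℝ => (ball x₀ R)ᶜ)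
    (fun R => measurableSet_ball.compl.nullMeasurableSet)
    (fun R R' h => compl_subset_compl.2 (ball_subset_ball h))
    ⟨0, ne_top_of_le_ne_top hνuniv (measure_mono (subset_univ _))⟩
  rw [hempty, measure_empty] at hlim
  have hrpow := (ENNReal.continuous_rpow_const (y := 1 / p.toReal)).tendsto 0
  rw [ENNReal.zero_rpow_of_pos (by simp [ENNReal.toReal_pos hp0 hp])] at hrpow
  simp_rw [hν]
  exact hrpow.comp hlim

theorem exists_pos_forall_le_ofReal_mul_lt {M ε : ℝ} (hM : 0 ≤ M) (hε : 0 < ε) :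
    ∃ η > 0, ∀ t ≤ ENNReal.ofReal η, ENNReal.ofReal M * t < ENNReal.ofReal ε := by
  refine ⟨ε / (M + 1), by positivity, fun t ht => ?_⟩
  calc ENNReal.ofReal M * t ≤ ENNReal.ofReal (M * (ε / (M + 1))) := by
        rw [ENNReal.ofReal_mul hM]
        gcongr
    _ < ENNReal.ofReal ε := by
        rw [ENNReal.ofReal_lt_ofReal_iff hε, mul_div_assoc', div_lt_iff₀ (by positivity)]
        nlinarith

theorem stmt_18_general (n : ℕ) (d : ℝ)
    (E : Set (EuclideanSpace ℝ (Fin n)))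
    (m : Measure (EuclideanSpace ℝ (Fin n))) (hmE : m Eᶜ = 0)
    (C₁ C₂ : ℝ) (hC₁ : 0 < C₁) (hC₁₂ : C₁ ≤ C₂)
    (hup : ∀ x ∈ E, ∀ r : ℝ, 0 < r → m (Metric.ball x r) ≤ ENNReal.ofReal (C₂ * r ^ d))
    (α p : ℝ) (hα0 : 0 < α) (hαd : α < d) (hp : d / α < p)
    (f : EuclideanSpace ℝ (Fin n) → ℝ)
    (hf : MemLp f (ENNReal.ofReal p) (m.restrict E)) :
    (∃ C : ℝ, 0 < C ∧ ∀ x ∈ E,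
        (∫⁻ y in E, ENNReal.ofReal
            (min (dist x y ^ (α - d)) (dist x y ^ (-(d + α))) * |f y|) ∂m)
          ≤ ENNReal.ofReal C * eLpNorm f (ENNReal.ofReal p) (m.restrict E)) ∧
    (∀ ε : ℝ, 0 < ε → ∃ R₀ : ℝ, 0 < R₀ ∧ ∀ R : ℝ, R₀ ≤ R → ∀ x ∈ E,
        (∫⁻ y in E \ Metric.ball (0 : EuclideanSpace ℝ (Fin n)) R, ENNReal.ofReal
            (min (dist x y ^ (α - d)) (dist x y ^ (-(d + α))) * |f y|) ∂m)
          < ENNReal.ofReal ε) ∧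
    (∀ ε : ℝ, 0 < ε → ∃ δ : ℝ, 0 < δ ∧ ∀ B : Set (EuclideanSpace ℝ (Fin n)),
        MeasurableSet B → m B < ENNReal.ofReal δ → ∀ x ∈ E,
        (∫⁻ y in B, ENNReal.ofReal
            (min (dist x y ^ (α - d)) (dist x y ^ (-(d + α))) * |f y|) ∂m)
          < ENNReal.ofReal ε) := by
  rw [Measure.restrict_eq_self_of_ae_mem (ae_iff.2 hmE)] at hf
  have hp1 : 1 < p := ((one_lt_div hα0).2 hαd).trans hp
  set q := p.conjExponent
  have hpq : p.HolderConjugate q := .conjExponent hp1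
  have hnear : (d - α) * q < d := by
    have hαp : d < p * α := (div_lt_iff₀ hα0).1 hp
    nlinarith [hpq.sub_one_mul_conj, hpq.symm.pos]
  have hfar : d < (d + α) * q := by nlinarith [hpq.symm.lt]
  set M := resolventLqConst C₂ d α q ^ (1 / q)
  have hM : 0 ≤ M := Real.rpow_nonneg (resolventLqConst_nonneg (hC₁.le.trans hC₁₂) d α q) _
  have hbound : ∀ x ∈ E, ∀ s, ∫⁻ y in s, ENNReal.ofReal
      (min (dist x y ^ (α - d)) (dist x y ^ (-(d + α))) * |f y|) ∂m
        ≤ ENNReal.ofReal M * eLpNorm f (ENNReal.ofReal p) (m.restrict s) := fun x hx s =>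
    lintegral_resolventProfile_mul_le m x (hC₁.le.trans hC₁₂) (hup x hx) hα0 hαd hpq hnear hfar
      hf.1 s
  refine ⟨⟨M + 1, by positivity, fun x hx => (hbound x hx E).trans (by gcongr; linarith)⟩,
    fun ε hε => ?_, fun ε hε => ?_⟩
  · obtain ⟨η, hη, hsmall⟩ := exists_pos_forall_le_ofReal_mul_lt hM hε
    obtain ⟨R₁, hR₁⟩ := eventually_atTop.1 <|
      (hf.tendsto_eLpNorm_restrict_compl_ball (by simpa using hp1.trans' one_pos)
        ENNReal.ofReal_ne_top 0).eventually (gt_mem_nhds (ENNReal.ofReal_pos.2 hη))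
    refine ⟨max R₁ 1, by positivity, fun R hR x hx => (hbound x hx _).trans_lt (hsmall _ ?_)⟩
    exact (eLpNorm_mono_measure _ (Measure.restrict_mono (fun y hy => hy.2) le_rfl)).trans
      (hR₁ R (le_of_max_le_left hR)).le
  · obtain ⟨η, hη, hsmall⟩ := exists_pos_forall_le_ofReal_mul_lt hM hε
    obtain ⟨δ, hδ, hδf⟩ :=
      hf.eLpNorm_indicator_le (ENNReal.one_le_ofReal.2 hp1.le) ENNReal.ofReal_ne_top hη
    refine ⟨δ, hδ, fun B hB hmB x hx => (hbound x hx B).trans_lt (hsmall _ ?_)⟩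
    rw [← eLpNorm_indicator_eq_eLpNorm_restrict hB]
    exact hδf B hB hmB.le

/-- On a global `d`-set `E ⊆ ℝⁿ`, for `0 < α < d`, `g(r) = min(r^{α-d}, r^{-(d+α)})`,
`p > d/α` and `f ∈ L^p(E;m)`:
(a) `sup_{x∈E} ∫_E g(|x-y|)|f(y)| m(dy) ≤ C ‖f‖_{L^p(E;m)}`;
(b) `lim_{R→∞} sup_{x∈E} ∫_{E∖B(0,R)} g(|x-y|)|f(y)| m(dy) = 0`;
(c) uniform absolute continuity over Borel sets `B` with small `m`-measure. -/
theorem stmt_18 (n : ℕ) (hn : 1 ≤ n) (d : ℝ) (hd0 : 0 < d) (hdn : d ≤ n)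
    (E : Set (EuclideanSpace ℝ (Fin n))) (hE : MeasurableSet E) (hEne : E.Nonempty)
    (m : Measure (EuclideanSpace ℝ (Fin n))) (hmE : m Eᶜ = 0)
    (C₁ C₂ : ℝ) (hC₁ : 0 < C₁) (hC₁₂ : C₁ ≤ C₂)
    (hlow : ∀ x ∈ E, ∀ r : ℝ, 0 < r → ENNReal.ofReal (C₁ * r ^ d) ≤ m (Metric.ball x r))
    (hup : ∀ x ∈ E, ∀ r : ℝ, 0 < r → m (Metric.ball x r) ≤ ENNReal.ofReal (C₂ * r ^ d))
    (α p : ℝ) (hα0 : 0 < α) (hαd : α < d) (hp : d / α < p)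
    (f : EuclideanSpace ℝ (Fin n) → ℝ)
    (hf : MemLp f (ENNReal.ofReal p) (m.restrict E)) :
    (∃ C : ℝ, 0 < C ∧ ∀ x ∈ E,
        (∫⁻ y in E, ENNReal.ofReal
            (min (dist x y ^ (α - d)) (dist x y ^ (-(d + α))) * |f y|) ∂m)
          ≤ ENNReal.ofReal C * eLpNorm f (ENNReal.ofReal p) (m.restrict E)) ∧
    (∀ ε : ℝ, 0 < ε → ∃ R₀ : ℝ, 0 < R₀ ∧ ∀ R : ℝ, R₀ ≤ R → ∀ x ∈ E,
        (∫⁻ y in E \ Metric.ball (0 : EuclideanSpace ℝ (Fin n)) R, ENNReal.ofReal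
            (min (dist x y ^ (α - d)) (dist x y ^ (-(d + α))) * |f y|) ∂m)
          < ENNReal.ofReal ε) ∧
    (∀ ε : ℝ, 0 < ε → ∃ δ : ℝ, 0 < δ ∧ ∀ B : Set (EuclideanSpace ℝ (Fin n)),
        MeasurableSet B → m B < ENNReal.ofReal δ → ∀ x ∈ E,
        (∫⁻ y in B, ENNReal.ofReal
            (min (dist x y ^ (α - d)) (dist x y ^ (-(d + α))) * |f y|) ∂m)
          < ENNReal.ofReal ε) :=
  stmt_18_general n d E m hmE C₁ C₂ hC₁ hC₁₂ hup α p hα0 hαd hp f hf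
end
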